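/- arXiv:2605.30879 — 4 statements merged into one kernel-verified Lean document; each statement's English description precedes it below -/
import Mathlib

section
/- Characterization of positive assortative segregation in the mean-measurable case: The segregation map S := G⁻¹ ∘ F is the equilibrium matching (i.e. positive assortative segregation is a competitive equilibrium) if and only if the function x ↦ v_z(x, S(x)) is (weakly) increasing on X. -/
/-!
In an equilibrium supported on the graph of `S`, every `x` maximizes its profit
`z ↦ v(x, z) - q(z)` at `z = S x`. Against a convex wage `q` this squeezes
`v_z(x, S x) ≤ slope q (S x) (S x') ≤ v_z(x', S x')` for `x < x'`.

Conversely, if `x ↦ v_z(x, S x)` is increasing, take as wage `q` the primitive of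
`w(z) = v_z(S⁻¹ z, z)`; it is convex because `w` is increasing. Since `v_xz > 0`,
`v_z(x, z) ≤ w(z)` for `z ≥ S x` and `≥` for `z ≤ S x`, so `S x` is a global maximizer of the profit
of `x`, and the price `p(x) = v(x, S x) - q(S x)` is Lipschitz as an upper envelope of uniformly
Lipschitz functions. The second marginal of the matching is `ν` because `G ∘ S = F`, which
settles the majorization and budget conditions with equality.
-/

open MeasureTheory Set
open scoped NNReal

noncomputable section

/-- The support of a measure: the points all of whose open neighborhoods have positive
measure (the smallest closed set of full measure). -/
def msupport {Z : Type*} [TopologicalSpace Z] [MeasurableSpace Z] (γ : Measure Z) : Set Z :=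
  { z | ∀ U : Set Z, IsOpen U → z ∈ U → 0 < γ U }

/-- The cdf of a Borel measure on `ℝ`. -/
def cdfOf (μ : Measure ℝ) : ℝ → ℝ := fun x => (μ (Set.Iic x)).toReal

/-- `Majorizes a b H K` (`H ⪰ K`): `∫_a^y H ≤ ∫_a^y K` for all `y ∈ [a,b]`,
with equality at `y = b`. -/
def Majorizes (a b : ℝ) (H K : ℝ → ℝ) : Prop :=
  (∀ y ∈ Set.Icc a b, (∫ t in a..y, H t) ≤ ∫ t in a..y, K t) ∧
  ((∫ t in a..b, H t) = ∫ t in a..b, K t)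

/-- A probability measure on `ℝ`, concentrated on `[a,b]`, whose cdf has a continuous
strictly positive density on `[a,b]`. -/
def HasPosDensityCDF (a b : ℝ) (μ : Measure ℝ) : Prop :=
  IsProbabilityMeasure μ ∧ μ (Set.Icc a b)ᶜ = 0 ∧
  ∃ f : ℝ → ℝ, ContinuousOn f (Set.Icc a b) ∧ (∀ t ∈ Set.Icc a b, 0 < f t) ∧
    ∀ t ∈ Set.Icc a b, cdfOf μ t = ∫ s in a..t, f s

/-- A mean-measurable competitive equilibrium for data `(v, μ, ν)` on
`X × Y = [x0,x1] × [y0,y1]`: a probability measure `J` on `X × Y` whose `X`-marginal has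
the cdf of `μ` and whose `Y`-marginal cdf majorizes that of `ν`, together with a
Lipschitz price `p` and a Lipschitz convex wage `q` with zero profits on `supp J`,
no profitable entry, and the budget condition `∫ q dH = ∫ q dG`. -/
def IsMMCE (x0 x1 y0 y1 : ℝ) (v : ℝ → ℝ → ℝ) (μ ν : Measure ℝ)
    (J : Measure (ℝ × ℝ)) (p q : ℝ → ℝ) : Prop :=
  IsProbabilityMeasure J ∧
  J ((Set.Icc x0 x1 ×ˢ Set.Icc y0 y1)ᶜ) = 0 ∧
  (∀ x : ℝ, cdfOf (J.map Prod.fst) x = cdfOf μ x) ∧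
  Majorizes y0 y1 (cdfOf (J.map Prod.snd)) (cdfOf ν) ∧
  (∃ K : ℝ≥0, LipschitzOnWith K p (Set.Icc x0 x1)) ∧
  (∃ K : ℝ≥0, LipschitzOnWith K q (Set.Icc y0 y1)) ∧
  ConvexOn ℝ (Set.Icc y0 y1) q ∧
  (∀ a ∈ msupport J, p a.1 + q a.2 = v a.1 a.2) ∧
  (∀ x ∈ Set.Icc x0 x1, ∀ z ∈ Set.Icc y0 y1, v x z ≤ p x + q z) ∧
  (∫ z, q z ∂(J.map Prod.snd)) = ∫ z, q z ∂ν

/-- The data of a twice continuously differentiable production function on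
`[x0,x1] × [y0,y1]`, together with its partial derivatives. -/
def IsC2Data (x0 x1 y0 y1 : ℝ) (v vx vz vxx vxz vzz : ℝ → ℝ → ℝ) : Prop :=
  (∀ x ∈ Set.Icc x0 x1, ∀ z ∈ Set.Icc y0 y1, HasDerivAt (fun t => v t z) (vx x z) x) ∧
  (∀ x ∈ Set.Icc x0 x1, ∀ z ∈ Set.Icc y0 y1, HasDerivAt (fun t => v x t) (vz x z) z) ∧
  (∀ x ∈ Set.Icc x0 x1, ∀ z ∈ Set.Icc y0 y1, HasDerivAt (fun t => vx t z) (vxx x z) x) ∧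
  (∀ x ∈ Set.Icc x0 x1, ∀ z ∈ Set.Icc y0 y1, HasDerivAt (fun t => vz t z) (vxz x z) x) ∧
  (∀ x ∈ Set.Icc x0 x1, ∀ z ∈ Set.Icc y0 y1, HasDerivAt (fun t => vz x t) (vzz x z) z) ∧
  ContinuousOn (fun a : ℝ × ℝ => vxx a.1 a.2) (Set.Icc x0 x1 ×ˢ Set.Icc y0 y1) ∧
  ContinuousOn (fun a : ℝ × ℝ => vxz a.1 a.2) (Set.Icc x0 x1 ×ˢ Set.Icc y0 y1) ∧
  ContinuousOn (fun a : ℝ × ℝ => vzz a.1 a.2) (Set.Icc x0 x1 ×ˢ Set.Icc y0 y1)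

/-- Strictly increasing differences (`v_xz > 0`) and strictly decreasing returns
(`v_zz < 0`) on `[x0,x1] × [y0,y1]`. -/
def SortingPooling (x0 x1 y0 y1 : ℝ) (vxz vzz : ℝ → ℝ → ℝ) : Prop :=
  (∀ x ∈ Set.Icc x0 x1, ∀ z ∈ Set.Icc y0 y1, 0 < vxz x z) ∧
  (∀ x ∈ Set.Icc x0 x1, ∀ z ∈ Set.Icc y0 y1, vzz x z < 0)

open Filter Topology intervalIntegral

section Cdf

variable {γ : Measure ℝ} {a b c d : ℝ}

lemma measureReal_Ioc_eq_cdfOf_sub [IsFiniteMeasure γ] (hcd : c ≤ d) :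
    γ.real (Ioc c d) = cdfOf γ d - cdfOf γ c := by
  rw [← Iic_sdiff_Iic, measureReal_sdiff (Iic_subset_Iic.2 hcd) measurableSet_Iic]
  rfl

namespace HasPosDensityCDF

lemma cdfOf_left (h : HasPosDensityCDF a b γ) (hab : a ≤ b) : cdfOf γ a = 0 := by
  obtain ⟨-, -, f, -, -, hcdf⟩ := h
  rw [hcdf a ⟨le_rfl, hab⟩, integral_same]

lemma cdfOf_right (h : HasPosDensityCDF a b γ) : cdfOf γ b = 1 := by
  obtain ⟨hP, hγ, -⟩ := h
  have hIcc : γ (Icc a b) = 1 := (prob_compl_eq_zero_iff measurableSet_Icc).1 hγ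
  have hIic : γ (Iic b) = 1 :=
    le_antisymm prob_le_one (hIcc ▸ measure_mono fun _ ht => ht.2)
  rw [cdfOf, hIic, ENNReal.toReal_one]

lemma strictMonoOn_cdfOf (h : HasPosDensityCDF a b γ) : StrictMonoOn (cdfOf γ) (Icc a b) := by
  obtain ⟨-, -, f, hfc, hfpos, hcdf⟩ := h
  have hint : ∀ c ∈ Icc a b, ∀ d ∈ Icc a b, IntervalIntegrable f volume c d :=
    fun c hc d hd => (hfc.mono (uIcc_subset_Icc hc hd)).intervalIntegrable
  intro c hc d hd hcd
  have ha : a ∈ Icc a b := ⟨le_rfl, hc.1.trans hc.2⟩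
  rw [hcdf c hc, hcdf d hd, ← sub_pos, integral_interval_sub_left (hint a ha d hd) (hint a ha c hc)]
  exact intervalIntegral_pos_of_pos_on (hint c hc d hd)
    (fun t ht => hfpos t ⟨hc.1.trans ht.1.le, ht.2.le.trans hd.2⟩) hcd

lemma measure_Ioc_pos (h : HasPosDensityCDF a b γ) (hc : c ∈ Icc a b) (hd : d ∈ Icc a b)
    (hcd : c < d) : 0 < γ (Ioc c d) := by
  have := h.1
  have hreal : 0 < γ.real (Ioc c d) := by
    rw [measureReal_Ioc_eq_cdfOf_sub hcd.le, sub_pos]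
    exact h.strictMonoOn_cdfOf hc hd hcd
  exact (ENNReal.toReal_pos_iff.1 hreal).1

lemma measure_pos_of_mem_nhdsWithin (h : HasPosDensityCDF a b γ) (hab : a < b) {x : ℝ}
    (hx : x ∈ Icc a b) {V : Set ℝ} (hV : V ∈ 𝓝[Icc a b] x) : 0 < γ V := by
  obtain ⟨ε, hε, hball⟩ := Metric.mem_nhdsWithin_iff.1 hV
  have hc : max a (x - ε / 2) ∈ Icc a b :=
    ⟨le_max_left _ _, max_le hab.le (by linarith [hx.2])⟩
  have hd : min b (x + ε / 2) ∈ Icc a b :=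
    ⟨le_min hab.le (by linarith [hx.1]), min_le_left _ _⟩
  have hcd : max a (x - ε / 2) < min b (x + ε / 2) :=
    max_lt (lt_min hab (by linarith [hx.1])) (lt_min (by linarith [hx.2]) (by linarith))
  refine (h.measure_Ioc_pos hc hd hcd).trans_le (measure_mono fun t ht => hball ⟨?_, ?_⟩)
  · have h1 := (le_max_right a (x - ε / 2)).trans_lt ht.1
    have h2 := ht.2.trans (min_le_right b (x + ε / 2))
    rw [Metric.mem_ball, Real.dist_eq, abs_sub_lt_iff]
    constructor <;> linarith
  · exact ⟨hc.1.trans ht.1.le, ht.2.trans hd.2⟩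

end HasPosDensityCDF

end Cdf

section PushForward

variable {α β : Type*} [MeasurableSpace α] [MeasurableSpace β] {μ : Measure α} {s : Set α}
  {f : α → β}

lemma aemeasurable_of_continuousOn_of_compl_null [TopologicalSpace α] [OpensMeasurableSpace α]
    [TopologicalSpace β] [BorelSpace β] (hf : ContinuousOn f s) (hs : MeasurableSet s)
    (hμ : μ sᶜ = 0) : AEMeasurable f μ := by
  simpa only [Measure.restrict_eq_self_of_ae_mem (mem_ae_iff.2 hμ)] using
    hf.aemeasurable (μ := μ) hs

lemma map_compl_eq_zero_of_mapsTo (hf : AEMeasurable f μ) {t : Set β} (ht : MeasurableSet t)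
    (hμ : μ sᶜ = 0) (hst : MapsTo f s t) : μ.map f tᶜ = 0 := by
  rw [Measure.map_apply_of_aemeasurable hf ht.compl]
  exact measure_mono_null (fun x hx hxs => hx (hst hxs)) hμ

lemma mem_msupport_map [TopologicalSpace α] [TopologicalSpace β] [OpensMeasurableSpace β]
    (hf : AEMeasurable f μ) {x : α} (hfx : ContinuousWithinAt f s x)
    (hμ : ∀ V ∈ 𝓝[s] x, 0 < μ V) : f x ∈ msupport (μ.map f) := by
  intro U hU hxU
  rw [Measure.map_apply_of_aemeasurable hf hU.measurableSet]
  exact hμ _ (hfx.preimage_mem_nhdsWithin (hU.mem_nhds hxU))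

lemma mem_of_mem_msupport [TopologicalSpace β] {γ : Measure β} {C : Set β} (hC : IsClosed C)
    (hγ : γ Cᶜ = 0) {y : β} (hy : y ∈ msupport γ) : y ∈ C := by
  by_contra hyC
  exact (hy Cᶜ hC.isOpen_compl hyC).ne' hγ

end PushForward

section Graph

variable {α β : Type*} [MeasurableSpace α] [MeasurableSpace β] {μ : Measure α} {S : α → β}

lemma map_fst_map_graph (hS : AEMeasurable S μ) :
    (μ.map fun x => (x, S x)).map Prod.fst = μ := by
  rw [AEMeasurable.map_map_of_aemeasurable measurable_fst.aemeasurable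
    (aemeasurable_id'.prodMk hS)]
  exact Measure.map_id

lemma map_snd_map_graph (hS : AEMeasurable S μ) :
    (μ.map fun x => (x, S x)).map Prod.snd = μ.map S :=
  AEMeasurable.map_map_of_aemeasurable measurable_snd.aemeasurable (aemeasurable_id'.prodMk hS)

end Graph

lemma MeasureTheory.Measure.ext_of_Iic_of_compl_Icc_eq_zero {γ γ' : Measure ℝ} [IsProbabilityMeasure γ]
    [IsProbabilityMeasure γ'] {a b : ℝ} (hγ : γ (Icc a b)ᶜ = 0) (hγ' : γ' (Icc a b)ᶜ = 0)
    (h : ∀ r ∈ Icc a b, γ (Iic r) = γ' (Iic r)) : γ = γ' := by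
  refine Measure.ext_of_Iic γ γ' fun r => ?_
  rcases lt_or_ge r a with hra | har
  · have hsub : Iic r ⊆ (Icc a b)ᶜ := fun t ht hab => (ht.trans_lt hra).not_ge hab.1
    rw [measure_mono_null hsub hγ, measure_mono_null hsub hγ']
  rcases le_or_gt b r with hbr | hrb
  · have hsub : (Iic r)ᶜ ⊆ (Icc a b)ᶜ := compl_subset_compl.2 fun t ht => ht.2.trans hbr
    rw [(prob_compl_eq_zero_iff measurableSet_Iic).1 (measure_mono_null hsub hγ),
      (prob_compl_eq_zero_iff measurableSet_Iic).1 (measure_mono_null hsub hγ')]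
  · exact h r ⟨har, hrb.le⟩

lemma map_eq_of_cdfOf_comp_eq {μ ν : Measure ℝ} [IsProbabilityMeasure μ] [IsProbabilityMeasure ν]
    {x0 x1 y0 y1 : ℝ} {S : ℝ → ℝ} (hμ : μ (Icc x0 x1)ᶜ = 0) (hν : ν (Icc y0 y1)ᶜ = 0)
    (hSm : AEMeasurable S μ) (hSmono : StrictMonoOn S (Icc x0 x1))
    (hSmaps : MapsTo S (Icc x0 x1) (Icc y0 y1)) (hSsurj : SurjOn S (Icc x0 x1) (Icc y0 y1))
    (hcdf : ∀ x ∈ Icc x0 x1, cdfOf ν (S x) = cdfOf μ x) : μ.map S = ν := by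
  have := Measure.isProbabilityMeasure_map (μ := μ) hSm
  refine Measure.ext_of_Iic_of_compl_Icc_eq_zero
    (map_compl_eq_zero_of_mapsTo hSm measurableSet_Icc hμ hSmaps) hν fun r hr => ?_
  obtain ⟨c, hc, rfl⟩ := hSsurj hr
  have hpre : S ⁻¹' Iic (S c) =ᵐ[μ] Iic c := by
    filter_upwards [mem_ae_iff.2 hμ] with x hx
    exact propext (hSmono.le_iff_le hx hc)
  rw [Measure.map_apply_of_aemeasurable hSm measurableSet_Iic, measure_congr hpre,
    ← ENNReal.toReal_eq_toReal_iff' (measure_ne_top _ _) (measure_ne_top _ _)]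
  exact (hcdf c hc).symm

namespace MonotoneOn

variable {w : ℝ → ℝ} {a b x y : ℝ}

lemma integral_le_sub_mul (hw : MonotoneOn w (Icc a b)) (hx : a ≤ x) (hxy : x ≤ y)
    (hy : y ≤ b) : ∫ t in x..y, w t ≤ (y - x) * w y := by
  have hsub : Icc x y ⊆ Icc a b := Icc_subset_Icc hx hy
  calc ∫ t in x..y, w t ≤ ∫ _ in x..y, w y :=
        integral_mono_on hxy ((hw.mono (uIcc_of_le hxy ▸ hsub)).intervalIntegrable)
          intervalIntegrable_const fun t ht => hw (hsub ht) (hsub ⟨hxy, le_rfl⟩) ht.2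
    _ = (y - x) * w y := by rw [intervalIntegral.integral_const, smul_eq_mul]

lemma sub_mul_le_integral (hw : MonotoneOn w (Icc a b)) (hx : a ≤ x) (hxy : x ≤ y)
    (hy : y ≤ b) : (y - x) * w x ≤ ∫ t in x..y, w t := by
  have hsub : Icc x y ⊆ Icc a b := Icc_subset_Icc hx hy
  calc (y - x) * w x = ∫ _ in x..y, w x := by rw [intervalIntegral.integral_const, smul_eq_mul]
    _ ≤ ∫ t in x..y, w t :=
        integral_mono_on hxy intervalIntegrable_const
          ((hw.mono (uIcc_of_le hxy ▸ hsub)).intervalIntegrable)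
          fun t ht => hw (hsub ⟨le_rfl, hxy⟩) (hsub ht) ht.1

lemma integral_sub_integral (hw : MonotoneOn w (Icc a b)) (hx : x ∈ Icc a b)
    (hy : y ∈ Icc a b) : (∫ t in a..y, w t) - ∫ t in a..x, w t = ∫ t in x..y, w t := by
  have ha : a ∈ Icc a b := ⟨le_rfl, hx.1.trans hx.2⟩
  exact integral_interval_sub_left (hw.mono (uIcc_subset_Icc ha hy)).intervalIntegrable
    (hw.mono (uIcc_subset_Icc ha hx)).intervalIntegrable

lemma convexOn_primitive (hw : MonotoneOn w (Icc a b)) :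
    ConvexOn ℝ (Icc a b) fun z => ∫ t in a..z, w t := by
  refine convexOn_of_slope_mono_adjacent (convex_Icc a b) fun {x y z} hx hz hxy hyz => ?_
  have hy : y ∈ Icc a b := ⟨hx.1.trans hxy.le, hyz.le.trans hz.2⟩
  rw [hw.integral_sub_integral hx hy, hw.integral_sub_integral hy hz,
    div_le_iff₀ (sub_pos.2 hxy), div_mul_eq_mul_div, le_div_iff₀ (sub_pos.2 hyz)]
  have hxy' := hw.integral_le_sub_mul hx.1 hxy.le hy.2
  have hyz' := hw.sub_mul_le_integral hy.1 hyz.le hz.2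
  linarith [mul_le_mul_of_nonneg_right hxy' (sub_pos.2 hyz).le,
    mul_le_mul_of_nonneg_right hyz' (sub_pos.2 hxy).le]

lemma exists_lipschitzOnWith_primitive (hw : MonotoneOn w (Icc a b)) :
    ∃ K, LipschitzOnWith K (fun z => ∫ t in a..z, w t) (Icc a b) := by
  refine ⟨_, LipschitzOnWith.of_le_add_mul' (max |w a| |w b|) fun x hx y hy => ?_⟩
  have ha : a ∈ Icc a b := ⟨le_rfl, hx.1.trans hx.2⟩
  have hb : b ∈ Icc a b := ⟨hx.1.trans hx.2, le_rfl⟩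
  rw [Real.dist_eq, ← sub_le_iff_le_add']
  rcases le_total x y with hxy | hyx
  · rw [← neg_sub, hw.integral_sub_integral hx hy, abs_of_nonpos (sub_nonpos.2 hxy)]
    have h1 := hw.sub_mul_le_integral hx.1 hxy hy.2
    have h2 : -w x ≤ max |w a| |w b| :=
      (neg_le_neg (hw ha hx hx.1)).trans ((neg_le_abs _).trans (le_max_left _ _))
    linarith [mul_le_mul_of_nonneg_left h2 (sub_nonneg.2 hxy)]
  · rw [hw.integral_sub_integral hy hx, abs_of_nonneg (sub_nonneg.2 hyx)]
    have h1 := hw.integral_le_sub_mul hy.1 hyx hx.2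
    have h2 : w x ≤ max |w a| |w b| :=
      (hw hx hb hx.2).trans ((le_abs_self _).trans (le_max_right _ _))
    linarith [mul_le_mul_of_nonneg_left h2 (sub_nonneg.2 hyx)]

end MonotoneOn

lemma integral_mono_on_oriented {f g : ℝ → ℝ} {c d : ℝ} (hf : IntervalIntegrable f volume c d)
    (hg : IntervalIntegrable g volume c d) (hcd : ∀ t ∈ Icc c d, f t ≤ g t)
    (hdc : ∀ t ∈ Icc d c, g t ≤ f t) : ∫ t in c..d, f t ≤ ∫ t in c..d, g t := by
  rcases le_total c d with hle | hle
  · exact integral_mono_on hle hf hg hcd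
  · rw [integral_symm d, integral_symm d, neg_le_neg_iff]
    exact integral_mono_on hle hg.symm hf.symm hdc

lemma lipschitzOnWith_envelope {α β : Type*} [PseudoMetricSpace α] {v : α → β → ℝ}
    {q : β → ℝ} {σ : α → β} {s : Set α} {t : Set β} {K : ℝ≥0}
    (hv : ∀ z ∈ t, LipschitzOnWith K (fun x => v x z) s) (hσ : MapsTo σ s t)
    (hmax : ∀ x ∈ s, ∀ z ∈ t, v x z - q z ≤ v x (σ x) - q (σ x)) :
    LipschitzOnWith K (fun x => v x (σ x) - q (σ x)) s :=
  LipschitzOnWith.of_le_add_mul K fun x hx y hy => by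
    have := (hv (σ x) (hσ hx)).le_add_mul hx hy
    linarith [hmax y hy (σ x) (hσ hx)]

lemma Convex.abs_sub_le_of_hasDerivAt {s : Set ℝ} (hs : Convex ℝ s) {f f' : ℝ → ℝ} {C : ℝ}
    (hf : ∀ t ∈ s, HasDerivAt f (f' t) t) (hC : ∀ t ∈ s, |f' t| ≤ C) {x y : ℝ} (hx : x ∈ s)
    (hy : y ∈ s) : |f y - f x| ≤ C * |y - x| := by
  simpa only [Real.norm_eq_abs] using hs.norm_image_sub_le_of_norm_hasDerivWithin_le
    (fun t ht => (hf t ht).hasDerivWithinAt) (fun t ht => by simpa using hC t ht) hx hy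

namespace IsC2Data

variable {x0 x1 y0 y1 : ℝ} {v vx vz vxx vxz vzz : ℝ → ℝ → ℝ}

lemma continuousOn_vz (h : IsC2Data x0 x1 y0 y1 v vx vz vxx vxz vzz) {x : ℝ}
    (hx : x ∈ Icc x0 x1) : ContinuousOn (fun z => vz x z) (Icc y0 y1) :=
  fun z hz => (h.2.2.2.2.1 x hx z hz).continuousAt.continuousWithinAt

lemma integral_vz (h : IsC2Data x0 x1 y0 y1 v vx vz vxx vxz vzz) {x c d : ℝ}
    (hx : x ∈ Icc x0 x1) (hc : c ∈ Icc y0 y1) (hd : d ∈ Icc y0 y1) :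
    ∫ t in c..d, vz x t = v x d - v x c :=
  integral_eq_sub_of_hasDerivAt (fun t ht => h.2.1 x hx t (uIcc_subset_Icc hc hd ht))
    ((h.continuousOn_vz hx).mono (uIcc_subset_Icc hc hd)).intervalIntegrable

lemma monotoneOn_vz (h : IsC2Data x0 x1 y0 y1 v vx vz vxx vxz vzz)
    (hvxz : ∀ x ∈ Icc x0 x1, ∀ z ∈ Icc y0 y1, 0 ≤ vxz x z) {z : ℝ} (hz : z ∈ Icc y0 y1) :
    MonotoneOn (fun x => vz x z) (Icc x0 x1) :=
  monotoneOn_of_hasDerivWithinAt_nonneg (convex_Icc x0 x1)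
    (fun x hx => (h.2.2.2.1 x hx z hz).continuousAt.continuousWithinAt)
    (fun x hx => (h.2.2.2.1 x (interior_subset hx) z hz).hasDerivWithinAt)
    fun x hx => hvxz x (interior_subset hx) z hz

/-- Only `v_x(·, y0)` is known to be bounded, so `v(x, z) - v(x', z)` is split into its value at
`z = y0` and an increment in `z` controlled by the bound on `v_xz`. -/
lemma exists_lipschitzOnWith_fst (h : IsC2Data x0 x1 y0 y1 v vx vz vxx vxz vzz)
    (hy : y0 ≤ y1) :
    ∃ K : ℝ≥0, ∀ z ∈ Icc y0 y1, LipschitzOnWith K (fun x => v x z) (Icc x0 x1) := by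
  obtain ⟨hvx, hvz, hvxx, hvxz, -, -, hcxz, -⟩ := h
  have hy0 : y0 ∈ Icc y0 y1 := ⟨le_rfl, hy⟩
  obtain ⟨C, hC⟩ := (isCompact_Icc.prod isCompact_Icc).exists_bound_of_continuousOn hcxz
  obtain ⟨C0, hC0⟩ := isCompact_Icc.exists_bound_of_continuousOn
    fun x hx => (hvxx x hx y0 hy0).continuousAt.continuousWithinAt
  refine ⟨_, fun z hz => LipschitzOnWith.of_dist_le' (K := C * (y1 - y0) + C0)
    fun x hx x' hx' => ?_⟩
  rw [Real.dist_eq, Real.dist_eq]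
  have hvz_lip : ∀ t ∈ Icc y0 y1, |vz x t - vz x' t| ≤ C * |x - x'| := fun t ht =>
    (convex_Icc x0 x1).abs_sub_le_of_hasDerivAt (fun u hu => hvxz u hu t ht)
      (fun u hu => by simpa using hC (u, t) ⟨hu, ht⟩) hx' hx
  have hbase : |v x y0 - v x' y0| ≤ C0 * |x - x'| :=
    (convex_Icc x0 x1).abs_sub_le_of_hasDerivAt (fun u hu => hvx u hu y0 hy0)
      (fun u hu => by simpa using hC0 u hu) hx' hx
  have hincr : |(v x z - v x' z) - (v x y0 - v x' y0)| ≤ C * |x - x'| * |z - y0| :=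
    (convex_Icc y0 y1).abs_sub_le_of_hasDerivAt (f := fun t => v x t - v x' t)
      (fun t ht => (hvz x hx t ht).sub (hvz x' hx' t ht)) hvz_lip hy0 hz
  have hC_nonneg : 0 ≤ C * |x - x'| :=
    mul_nonneg ((norm_nonneg _).trans (hC (x0, y0) ⟨⟨le_rfl, hx.1.trans hx.2⟩, hy0⟩))
      (abs_nonneg _)
  have hz_y0 : |z - y0| ≤ y1 - y0 := by rw [abs_of_nonneg (sub_nonneg.2 hz.1)]; linarith [hz.2]
  have := mul_le_mul_of_nonneg_left hz_y0 hC_nonneg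
  linarith [abs_sub_abs_le_abs_sub (v x z - v x' z) (v x y0 - v x' y0)]

end IsC2Data

lemma surjOn_of_cdfOf_comp_eq {μ ν : Measure ℝ} {x0 x1 y0 y1 : ℝ} {S : ℝ → ℝ} (hx : x0 ≤ x1)
    (hy : y0 ≤ y1) (hμ : HasPosDensityCDF x0 x1 μ) (hν : HasPosDensityCDF y0 y1 ν)
    (hS : ∀ x ∈ Icc x0 x1, S x ∈ Icc y0 y1 ∧ cdfOf ν (S x) = cdfOf μ x)
    (hScont : ContinuousOn S (Icc x0 x1)) : SurjOn S (Icc x0 x1) (Icc y0 y1) := by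
  have hx0 : x0 ∈ Icc x0 x1 := ⟨le_rfl, hx⟩
  have hx1 : x1 ∈ Icc x0 x1 := ⟨hx, le_rfl⟩
  have hSx0 : S x0 = y0 := hν.strictMonoOn_cdfOf.injOn (hS x0 hx0).1 ⟨le_rfl, hy⟩ <| by
    rw [(hS x0 hx0).2, hμ.cdfOf_left hx, hν.cdfOf_left hy]
  have hSx1 : S x1 = y1 := hν.strictMonoOn_cdfOf.injOn (hS x1 hx1).1 ⟨hy, le_rfl⟩ <| by
    rw [(hS x1 hx1).2, hμ.cdfOf_right, hν.cdfOf_right]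
  have hIVT := intermediate_value_Icc hx hScont
  rwa [hSx0, hSx1] at hIVT

section Supporting

variable {s : Set ℝ} {φ q : ℝ → ℝ} {φ' a b : ℝ}

lemma HasDerivAt.le_slope_of_isMaxOn_sub (hφ : HasDerivAt φ φ' a) (hq : ConvexOn ℝ s q)
    (hmax : IsMaxOn (fun z => φ z - q z) s a) (ha : a ∈ s) (hb : b ∈ s) (hab : a < b) :
    φ' ≤ slope q a b := by
  refine le_of_tendsto (hφ.tendsto_slope.mono_left (nhdsGT_le_nhdsNE a)) ?_
  filter_upwards [Ioc_mem_nhdsGT hab] with z hz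
  have hzs : z ∈ s := (convex_iff_ordConnected.1 hq.1).out ha hb (Ioc_subset_Icc_self hz)
  calc slope φ a z ≤ slope q a z := by
        rw [slope_def_field, slope_def_field]
        exact div_le_div_of_nonneg_right (by linarith [isMaxOn_iff.1 hmax z hzs])
          (sub_pos.2 hz.1).le
    _ ≤ slope q a b := hq.slope_mono ha ⟨hzs, hz.1.ne'⟩ ⟨hb, hab.ne'⟩ hz.2

lemma HasDerivAt.slope_le_of_isMaxOn_sub (hφ : HasDerivAt φ φ' b) (hq : ConvexOn ℝ s q)
    (hmax : IsMaxOn (fun z => φ z - q z) s b) (ha : a ∈ s) (hb : b ∈ s) (hab : a < b) :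
    slope q a b ≤ φ' := by
  refine ge_of_tendsto (hφ.tendsto_slope.mono_left (nhdsLT_le_nhdsNE b)) ?_
  filter_upwards [Ico_mem_nhdsLT hab] with z hz
  have hzs : z ∈ s := (convex_iff_ordConnected.1 hq.1).out ha hb (Ico_subset_Icc_self hz)
  calc slope q a b = slope q b a := slope_comm q a b
    _ ≤ slope q b z := hq.slope_mono hb ⟨ha, hab.ne⟩ ⟨hzs, hz.2.ne⟩ hz.1
    _ ≤ slope φ b z := by
        rw [slope_def_field, slope_def_field]
        exact div_le_div_of_nonpos_of_le (sub_neg.2 hz.2).le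
          (by linarith [isMaxOn_iff.1 hmax z hzs])

end Supporting

lemma monotoneOn_marginal_of_isMaxOn {s t : Set ℝ} {v vz : ℝ → ℝ → ℝ} {q S : ℝ → ℝ}
    (hq : ConvexOn ℝ t q) (hSmono : StrictMonoOn S s) (hSmaps : MapsTo S s t)
    (hvz : ∀ x ∈ s, HasDerivAt (fun z => v x z) (vz x (S x)) (S x))
    (hmax : ∀ x ∈ s, IsMaxOn (fun z => v x z - q z) t (S x)) :
    MonotoneOn (fun x => vz x (S x)) s := by
  intro x hx x' hx' hxx'
  rcases hxx'.eq_or_lt with rfl | hlt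
  · exact le_rfl
  have hSS := hSmono hx hx' hlt
  exact ((hvz x hx).le_slope_of_isMaxOn_sub hq (hmax x hx) (hSmaps hx) (hSmaps hx') hSS).trans
    ((hvz x' hx').slope_le_of_isMaxOn_sub hq (hmax x' hx') (hSmaps hx) (hSmaps hx') hSS)

lemma IsMMCE.isMaxOn_sub {x0 x1 y0 y1 : ℝ} {v : ℝ → ℝ → ℝ} {μ ν : Measure ℝ}
    {J : Measure (ℝ × ℝ)} {p q : ℝ → ℝ} (h : IsMMCE x0 x1 y0 y1 v μ ν J p q) {x y : ℝ}
    (hxy : (x, y) ∈ msupport J) (hx : x ∈ Icc x0 x1) :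
    IsMaxOn (fun z => v x z - q z) (Icc y0 y1) y := by
  obtain ⟨-, -, -, -, -, -, -, hzero, hentry, -⟩ := h
  have hxy := hzero (x, y) hxy
  exact isMaxOn_iff.2 fun z hz => by linarith [hentry x hx z hz]

lemma exists_price_wage_of_monotoneOn {x0 x1 y0 y1 : ℝ} (hy : y0 ≤ y1) {S : ℝ → ℝ}
    (hSmono : StrictMonoOn S (Icc x0 x1)) (hSmaps : MapsTo S (Icc x0 x1) (Icc y0 y1))
    (hSsurj : SurjOn S (Icc x0 x1) (Icc y0 y1)) {v vx vz vxx vxz vzz : ℝ → ℝ → ℝ}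
    (hC2 : IsC2Data x0 x1 y0 y1 v vx vz vxx vxz vzz)
    (hvxz : ∀ x ∈ Icc x0 x1, ∀ z ∈ Icc y0 y1, 0 ≤ vxz x z)
    (hm : MonotoneOn (fun x => vz x (S x)) (Icc x0 x1)) :
    ∃ p q : ℝ → ℝ, (∃ K : ℝ≥0, LipschitzOnWith K p (Icc x0 x1)) ∧
      (∃ K : ℝ≥0, LipschitzOnWith K q (Icc y0 y1)) ∧ ConvexOn ℝ (Icc y0 y1) q ∧
      (∀ x ∈ Icc x0 x1, p x + q (S x) = v x (S x)) ∧
      ∀ x ∈ Icc x0 x1, ∀ z ∈ Icc y0 y1, v x z ≤ p x + q z := by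
  set T := Function.invFunOn S (Icc x0 x1)
  have hT : MapsTo T (Icc y0 y1) (Icc x0 x1) := hSsurj.mapsTo_invFunOn
  have hST : ∀ z ∈ Icc y0 y1, S (T z) = z := fun z hz => hSsurj.rightInvOn_invFunOn hz
  have hle_T : ∀ x ∈ Icc x0 x1, ∀ z ∈ Icc y0 y1, (x ≤ T z ↔ S x ≤ z) := fun x hx z hz => by
    rw [← hSmono.le_iff_le hx (hT hz), hST z hz]
  have hT_le : ∀ x ∈ Icc x0 x1, ∀ z ∈ Icc y0 y1, (T z ≤ x ↔ z ≤ S x) := fun x hx z hz => by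
    rw [← hSmono.le_iff_le (hT hz) hx, hST z hz]
  set w : ℝ → ℝ := fun z => vz (T z) z
  have hw : MonotoneOn w (Icc y0 y1) := fun z hz z' hz' hzz' => by
    have := hm (hT hz) (hT hz') ((hle_T _ (hT hz) z' hz').2 (by rwa [hST z hz]))
    simpa only [hST z hz, hST z' hz'] using this
  set q : ℝ → ℝ := fun z => ∫ t in y0..z, w t
  have hmax : ∀ x ∈ Icc x0 x1, ∀ z ∈ Icc y0 y1, v x z - q z ≤ v x (S x) - q (S x) := by
    intro x hx z hz
    have hSx := hSmaps hx
    have hvz_le : ∫ t in S x..z, vz x t ≤ ∫ t in S x..z, w t :=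
      integral_mono_on_oriented
        ((hC2.continuousOn_vz hx).mono (uIcc_subset_Icc hSx hz)).intervalIntegrable
        (hw.mono (uIcc_subset_Icc hSx hz)).intervalIntegrable
        (fun t ht => have htY : t ∈ Icc y0 y1 := ⟨hSx.1.trans ht.1, ht.2.trans hz.2⟩
          hC2.monotoneOn_vz hvxz htY hx (hT htY) ((hle_T x hx t htY).2 ht.1))
        (fun t ht => have htY : t ∈ Icc y0 y1 := ⟨hz.1.trans ht.1, ht.2.trans hSx.2⟩
          hC2.monotoneOn_vz hvxz htY (hT htY) hx ((hT_le x hx t htY).2 ht.2))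
    rw [hC2.integral_vz hx hSx hz, ← hw.integral_sub_integral hSx hz] at hvz_le
    linarith
  obtain ⟨K, hK⟩ := hC2.exists_lipschitzOnWith_fst hy
  exact ⟨fun x => v x (S x) - q (S x), q, ⟨K, lipschitzOnWith_envelope hK hSmaps hmax⟩,
    hw.exists_lipschitzOnWith_primitive, hw.convexOn_primitive, fun x _ => sub_add_cancel _ _,
    fun x hx z hz => by linarith [hmax x hx z hz]⟩

lemma isMMCE_map_graph {x0 x1 y0 y1 : ℝ} {v : ℝ → ℝ → ℝ} {μ ν : Measure ℝ}
    [IsProbabilityMeasure μ] {S p q : ℝ → ℝ} (hμ : μ (Icc x0 x1)ᶜ = 0)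
    (hScont : ContinuousOn S (Icc x0 x1)) (hSmaps : MapsTo S (Icc x0 x1) (Icc y0 y1))
    (hmarg : μ.map S = ν) (hp : ∃ K : ℝ≥0, LipschitzOnWith K p (Icc x0 x1))
    (hq : ∃ K : ℝ≥0, LipschitzOnWith K q (Icc y0 y1)) (hqc : ConvexOn ℝ (Icc y0 y1) q)
    (hzero : ∀ x ∈ Icc x0 x1, p x + q (S x) = v x (S x))
    (hentry : ∀ x ∈ Icc x0 x1, ∀ z ∈ Icc y0 y1, v x z ≤ p x + q z) :
    IsMMCE x0 x1 y0 y1 v μ ν (μ.map fun x => (x, S x)) p q := by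
  have hgraph : ContinuousOn (fun x => (x, S x)) (Icc x0 x1) := continuousOn_id.prodMk hScont
  have hJm := aemeasurable_of_continuousOn_of_compl_null hgraph measurableSet_Icc hμ
  have hSm := aemeasurable_of_continuousOn_of_compl_null hScont measurableSet_Icc hμ
  have hclosed : IsClosed ((fun x => (x, S x)) '' Icc x0 x1) :=
    (isCompact_Icc.image_of_continuousOn hgraph).isClosed
  refine ⟨Measure.isProbabilityMeasure_map hJm,
    map_compl_eq_zero_of_mapsTo hJm (measurableSet_Icc.prod measurableSet_Icc) hμ
      fun x hx => ⟨hx, hSmaps hx⟩,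
    fun x => by rw [map_fst_map_graph hSm],
    by rw [map_snd_map_graph hSm, hmarg]; exact ⟨fun _ _ => le_rfl, rfl⟩,
    hp, hq, hqc, fun a ha => ?_, hentry, by rw [map_snd_map_graph hSm, hmarg]⟩
  obtain ⟨x, hx, rfl⟩ := mem_of_mem_msupport hclosed
    (map_compl_eq_zero_of_mapsTo hJm hclosed.measurableSet hμ (mapsTo_image _ _)) ha
  exact hzero x hx

/-- **Characterization of PAS in the mean-measurable case** (Theorem 5, part 1):
the segregation map `S = G⁻¹ ∘ F` is the equilibrium matching iff `x ↦ v_z(x,S(x))` is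
weakly increasing on `X`. -/
theorem pas_is_equilibrium_matching_iff
    (x0 x1 y0 y1 : ℝ) (hx : x0 < x1) (hy : y0 < y1)
    (μ ν : Measure ℝ)
    (hμ : HasPosDensityCDF x0 x1 μ) (hν : HasPosDensityCDF y0 y1 ν)
    (S : ℝ → ℝ)
    (hS : ∀ x ∈ Set.Icc x0 x1, S x ∈ Set.Icc y0 y1 ∧ cdfOf ν (S x) = cdfOf μ x)
    (hScont : ContinuousOn S (Set.Icc x0 x1)) (hSmono : StrictMonoOn S (Set.Icc x0 x1))
    (v vx vz vxx vxz vzz : ℝ → ℝ → ℝ)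
    (hC2 : IsC2Data x0 x1 y0 y1 v vx vz vxx vxz vzz)
    (hSP : SortingPooling x0 x1 y0 y1 vxz vzz) :
    (∃ p q : ℝ → ℝ, IsMMCE x0 x1 y0 y1 v μ ν (μ.map fun x => (x, S x)) p q) ↔
      MonotoneOn (fun x => vz x (S x)) (Set.Icc x0 x1) := by
  have := hμ.1
  have := hν.1
  have hSmaps : MapsTo S (Icc x0 x1) (Icc y0 y1) := fun u hu => (hS u hu).1
  have hSsurj := surjOn_of_cdfOf_comp_eq hx.le hy.le hμ hν hS hScont
  have hgraph : ContinuousOn (fun x => (x, S x)) (Icc x0 x1) := continuousOn_id.prodMk hScont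
  constructor
  · rintro ⟨p, q, hJ⟩
    have hqc : ConvexOn ℝ (Icc y0 y1) q := hJ.2.2.2.2.2.2.1
    have hsupp : ∀ x ∈ Icc x0 x1, (x, S x) ∈ msupport (μ.map fun x => (x, S x)) :=
      fun u hu => mem_msupport_map
        (aemeasurable_of_continuousOn_of_compl_null hgraph measurableSet_Icc hμ.2.1) (hgraph u hu)
        fun V hV => hμ.measure_pos_of_mem_nhdsWithin hx hu hV
    exact monotoneOn_marginal_of_isMaxOn hqc hSmono hSmaps
      (fun u hu => hC2.2.1 u hu _ (hSmaps hu)) fun u hu => hJ.isMaxOn_sub (hsupp u hu) hu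
  · intro hm
    obtain ⟨p, q, hp, hq, hqc, hzero, hentry⟩ := exists_price_wage_of_monotoneOn hy.le hSmono
      hSmaps hSsurj hC2 (fun u hu z hz => (hSP.1 u hu z hz).le) hm
    have hmarg : μ.map S = ν := map_eq_of_cdfOf_comp_eq hμ.2.1 hν.2.1
      (aemeasurable_of_continuousOn_of_compl_null hScont measurableSet_Icc hμ.2.1) hSmono hSmaps
      hSsurj fun u hu => (hS u hu).2
    exact ⟨p, q, isMMCE_map_graph hμ.2.1 hScont hSmaps hmarg hp hq hqc hzero hentry⟩

end
end

section
/- Marginal-rate-of-substitution single-crossing equivalences: Let X = [x0,x1] and Y = [y0,y1] be compact real intervals and let v, v̂ : X × Y → ℝ be twice continuously differentiable with v_xz > 0, v̂_xz > 0, v_zz < 0, v̂_zz < 0 everywhere. Say v̂_z ⊵ v_z if for all x ≤ x' in X and z ≤ z' in Y, v_z(x',z') ≥ v_z(x,z) implies v̂_z(x',z') ≥ v̂_z(x,z). Then: (i) if v̂_z ⊵ v_z, then v̂_xz(x,z)/(−v̂_zz(x,z)) ≥ v_xz(x,z)/(−v_zz(x,z)) for all (x,z) ∈ X × Y; (ii)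 if v̂_xz(x,z)/(−v̂_zz(x',z')) ≥ v_xz(x,z)/(−v_zz(x',z')) for all (x,z) and (x',z') in X × Y, then v̂_z ⊵ v_z; (iii) the hypothesis of (ii) holds if and only if there exists a constant c > 0 such that v̂_xz(x,z) ≥ c·v_xz(x,z) and −v̂_zz(x,z) ≤ −c·v_zz(x,z) for all (x,z) ∈ X × Y. -/
open Set Filter Topology

/-!
(i) If `v̂_xz / (-v̂_zz) < s < v_xz / (-v_zz)` at some point, continuity gives a small box on which
`v_xz(P) + s v_zz(Q) > 0` and `v̂_xz(P) + s v̂_zz(Q) < 0` for all pairs of points `P, Q`. By the mean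
value theorem along the two sides of the box, its diagonal step `(h, s h)` raises `v_z` and lowers
`v̂_z`, against single crossing.

(iii) The two-point condition says every ratio `v̂_zz / v_zz` lies below every ratio
`v̂_xz / v_xz`; any `c` between the two sets works.

(ii) For such a `c`, `v̂_z - c v_z` has nonnegative partial derivatives, hence is monotone in both
arguments, and `v̂_z = c v_z + (v̂_z - c v_z)` inherits the single crossing of `v_z`.
-/

theorem exists_mem_Icc_sub_eq_mul_of_hasDerivAt {f f' : ℝ → ℝ} {a b : ℝ} (hab : a ≤ b)
    (hf : ∀ t ∈ Icc a b, HasDerivAt f (f' t) t) :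
    ∃ c ∈ Icc a b, f b - f a = (b - a) * f' c := by
  rcases hab.eq_or_lt with rfl | hlt
  · exact ⟨a, left_mem_Icc.2 le_rfl, by simp⟩
  obtain ⟨c, hc, hfc⟩ := exists_hasDerivAt_eq_slope f f' hlt
    (fun t ht => (hf t ht).continuousAt.continuousWithinAt)
    (fun t ht => hf t (Ioo_subset_Icc_self ht))
  refine ⟨c, Ioo_subset_Icc_self hc, ?_⟩
  rw [hfc, mul_div_cancel₀ _ (sub_ne_zero.2 hlt.ne')]

section Rectangle

variable {x0 x1 y0 y1 : ℝ}

theorem exists_sub_eq_mul_add_mul_of_partials {f fx fz : ℝ → ℝ → ℝ}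
    (hfx : ∀ x ∈ Icc x0 x1, ∀ z ∈ Icc y0 y1, HasDerivAt (fun t => f t z) (fx x z) x)
    (hfz : ∀ x ∈ Icc x0 x1, ∀ z ∈ Icc y0 y1, HasDerivAt (fun t => f x t) (fz x z) z)
    {x x' z z' : ℝ} (hx : x ∈ Icc x0 x1) (hx' : x' ∈ Icc x0 x1) (hxx' : x ≤ x')
    (hz : z ∈ Icc y0 y1) (hz' : z' ∈ Icc y0 y1) (hzz' : z ≤ z') :
    ∃ ξ ∈ Icc x x', ∃ η ∈ Icc z z', f x' z' - f x z = (x' - x) * fx ξ z + (z' - z) * fz x' η := by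
  obtain ⟨ξ, hξ, hξeq⟩ := exists_mem_Icc_sub_eq_mul_of_hasDerivAt hxx'
    (fun t ht => hfx t (Icc_subset_Icc hx.1 hx'.2 ht) z hz)
  obtain ⟨η, hη, hηeq⟩ := exists_mem_Icc_sub_eq_mul_of_hasDerivAt hzz'
    (fun u hu => hfz x' hx' u (Icc_subset_Icc hz.1 hz'.2 hu))
  exact ⟨ξ, hξ, η, hη, by linarith⟩

theorem lt_of_forall_mem_box_add_mul_pos {f fx fz : ℝ → ℝ → ℝ}
    (hfx : ∀ x ∈ Icc x0 x1, ∀ z ∈ Icc y0 y1, HasDerivAt (fun t => f t z) (fx x z) x)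
    (hfz : ∀ x ∈ Icc x0 x1, ∀ z ∈ Icc y0 y1, HasDerivAt (fun t => f x t) (fz x z) z)
    {x z h s : ℝ} (hh : 0 < h) (hs : 0 ≤ s)
    (hbox : Icc x (x + h) ×ˢ Icc z (z + s * h) ⊆ Icc x0 x1 ×ˢ Icc y0 y1)
    (hpos : ∀ P ∈ Icc x (x + h) ×ˢ Icc z (z + s * h), ∀ Q ∈ Icc x (x + h) ×ˢ Icc z (z + s * h),
      0 < fx P.1 P.2 + s * fz Q.1 Q.2) :
    f x z < f (x + h) (z + s * h) := by
  have hxh : x ≤ x + h := by linarith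
  have hzh : z ≤ z + s * h := le_add_of_nonneg_right (mul_nonneg hs hh.le)
  have h₀ := hbox (mk_mem_prod (left_mem_Icc.2 hxh) (left_mem_Icc.2 hzh))
  have h₁ := hbox (mk_mem_prod (right_mem_Icc.2 hxh) (right_mem_Icc.2 hzh))
  obtain ⟨ξ, hξ, η, hη, hf⟩ :=
    exists_sub_eq_mul_add_mul_of_partials hfx hfz h₀.1 h₁.1 hxh h₀.2 h₁.2 hzh
  have := hpos (ξ, z) ⟨hξ, left_mem_Icc.2 hzh⟩ (x + h, η) ⟨right_mem_Icc.2 hxh, hη⟩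
  nlinarith

theorem exists_Icc_add_subset_inter {a h : ℝ} (ha : a ∈ Icc x0 x1) (hh : 0 ≤ h)
    (hhx : h ≤ x1 - x0) : ∃ x, Icc x (x + h) ⊆ Icc x0 x1 ∩ Icc (a - h) (a + h) := by
  refine ⟨min a (x1 - h), fun t ht => ?_⟩
  have := min_le_left a (x1 - h)
  have := min_le_right a (x1 - h)
  have := le_min ha.1 (by linarith : x0 ≤ x1 - h)
  have := le_min (by linarith : a - h ≤ a) (by linarith [ha.2] : a - h ≤ x1 - h)
  exact ⟨⟨by linarith [ht.1], by linarith [ht.2]⟩, by linarith [ht.1], by linarith [ht.2]⟩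

theorem exists_box_subset_inter_of_mem_nhdsWithin (hx : x0 < x1) (hy : y0 < y1) {a b s : ℝ}
    (ha : a ∈ Icc x0 x1) (hb : b ∈ Icc y0 y1) (hs : 0 < s) {U : Set (ℝ × ℝ)}
    (hU : U ∈ 𝓝[Icc x0 x1 ×ˢ Icc y0 y1] (a, b)) :
    ∃ x z h, 0 < h ∧ Icc x (x + h) ×ˢ Icc z (z + s * h) ⊆ (Icc x0 x1 ×ˢ Icc y0 y1) ∩ U := by
  obtain ⟨ε, hε, hball⟩ := Metric.mem_nhdsWithin_iff.1 hU
  set δ := min (ε / 2) (min (x1 - x0) (y1 - y0))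
  have hδ : 0 < δ := lt_min (half_pos hε) (lt_min (sub_pos.2 hx) (sub_pos.2 hy))
  have hδε : δ < ε := (min_le_left _ _).trans_lt (half_lt_self hε)
  have hδx : δ ≤ x1 - x0 := (min_le_right _ _).trans (min_le_left _ _)
  have hδy : δ ≤ y1 - y0 := (min_le_right _ _).trans (min_le_right _ _)
  set h := δ / (1 + s)
  have hh : 0 < h := div_pos hδ (by linarith)
  have hhδ : h ≤ δ := div_le_self hδ.le (by linarith)
  have hshδ : s * h ≤ δ := by
    rw [mul_div_assoc', div_le_iff₀ (by linarith)]
    nlinarith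
  obtain ⟨x, hxI⟩ := exists_Icc_add_subset_inter ha hh.le (hhδ.trans hδx)
  obtain ⟨z, hzJ⟩ := exists_Icc_add_subset_inter hb (by positivity) (hshδ.trans hδy)
  refine ⟨x, z, h, hh, fun q hq => ?_⟩
  obtain ⟨ht, hta⟩ := hxI hq.1
  obtain ⟨hu, hub⟩ := hzJ hq.2
  refine ⟨⟨ht, hu⟩, hball ⟨?_, ht, hu⟩⟩
  rw [Metric.mem_ball, Prod.dist_eq, max_lt_iff, Real.dist_eq, Real.dist_eq, abs_lt, abs_lt]
  exact ⟨⟨by linarith [hta.1], by linarith [hta.2]⟩, by linarith [hub.1], by linarith [hub.2]⟩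

end Rectangle

theorem exists_mem_nhdsWithin_forall_add_pos {X : Type*} [TopologicalSpace X] {R : Set X}
    {p : X} {f g : X → ℝ} (hf : ContinuousWithinAt f R p) (hg : ContinuousWithinAt g R p)
    (hpos : 0 < f p + g p) : ∃ U ∈ 𝓝[R] p, ∀ P ∈ U, ∀ Q ∈ U, 0 < f P + g Q := by
  have hf' := hf.eventually (lt_mem_nhds (by linarith : f p - (f p + g p) / 2 < f p))
  have hg' := hg.eventually (lt_mem_nhds (by linarith : g p - (f p + g p) / 2 < g p))
  exact ⟨_, hf'.and hg', fun P hP Q hQ => by linarith [hP.1, hQ.2]⟩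

theorem exists_const_iff_forall_div_le {α : Type*} {S : Set α} (hS : S.Nonempty)
    {f g F G : α → ℝ} (hf : ∀ p ∈ S, 0 < f p) (hg : ∀ p ∈ S, 0 < g p)
    (hF : ∀ p ∈ S, 0 < F p) (hG : ∀ p ∈ S, 0 < G p) :
    (∀ p ∈ S, ∀ q ∈ S, f p / g q ≤ F p / G q) ↔
      ∃ c, 0 < c ∧ ∀ p ∈ S, c * f p ≤ F p ∧ G p ≤ c * g p := by
  constructor
  · intro h
    have key : ∀ p ∈ S, ∀ q ∈ S, G q / g q ≤ F p / f p := fun p hp q hq => by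
      have := (div_le_div_iff₀ (hg q hq) (hG q hq)).1 (h p hp q hq)
      rw [div_le_div_iff₀ (hg q hq) (hf p hp)]
      linarith
    obtain ⟨p₀, hp₀⟩ := hS
    set c := sSup ((fun q => G q / g q) '' S)
    have hbdd : BddAbove ((fun q => G q / g q) '' S) := by
      refine ⟨F p₀ / f p₀, ?_⟩
      rintro _ ⟨q, hq, rfl⟩
      exact key p₀ hp₀ q hq
    have hle : ∀ q ∈ S, G q / g q ≤ c := fun q hq => le_csSup hbdd (mem_image_of_mem _ hq)
    have hge : ∀ p ∈ S, c ≤ F p / f p := fun p hp =>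
      csSup_le (Nonempty.image _ ⟨p₀, hp₀⟩) (by rintro _ ⟨q, hq, rfl⟩; exact key p hp q hq)
    refine ⟨c, (div_pos (hG p₀ hp₀) (hg p₀ hp₀)).trans_le (hle p₀ hp₀), fun p hp =>
      ⟨(le_div_iff₀ (hf p hp)).1 (hge p hp), (div_le_iff₀ (hg p hp)).1 (hle p hp)⟩⟩
  · rintro ⟨c, hc, hcS⟩ p hp q hq
    rw [← mul_div_mul_left (f p) (g q) hc.ne']
    exact div_le_div₀ (hF p hp).le (hcS p hp).1 (hG q hq) (hcS q hq).2

/-- `SingleCrossingDominates I J f g` is the paper's `g ⊵ f` on the rectangle `I × J`. -/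
def SingleCrossingDominates (I J : Set ℝ) (f g : ℝ → ℝ → ℝ) : Prop :=
  ∀ x ∈ I, ∀ x' ∈ I, x ≤ x' → ∀ z ∈ J, ∀ z' ∈ J, z ≤ z' → f x z ≤ f x' z' → g x z ≤ g x' z'

section MRS

variable {x0 x1 y0 y1 : ℝ} {vz vxz vzz vhz vhxz vhzz : ℝ → ℝ → ℝ}

theorem div_le_div_of_singleCrossingDominates (hx : x0 < x1) (hy : y0 < y1)
    (hvxz : ∀ x ∈ Icc x0 x1, ∀ z ∈ Icc y0 y1, HasDerivAt (fun t => vz t z) (vxz x z) x)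
    (hvzz : ∀ x ∈ Icc x0 x1, ∀ z ∈ Icc y0 y1, HasDerivAt (fun t => vz x t) (vzz x z) z)
    (hvhxz : ∀ x ∈ Icc x0 x1, ∀ z ∈ Icc y0 y1, HasDerivAt (fun t => vhz t z) (vhxz x z) x)
    (hvhzz : ∀ x ∈ Icc x0 x1, ∀ z ∈ Icc y0 y1, HasDerivAt (fun t => vhz x t) (vhzz x z) z)
    (hvxzcont : ContinuousOn (fun a : ℝ × ℝ => vxz a.1 a.2) (Icc x0 x1 ×ˢ Icc y0 y1))
    (hvzzcont : ContinuousOn (fun a : ℝ × ℝ => vzz a.1 a.2) (Icc x0 x1 ×ˢ Icc y0 y1))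
    (hvhxzcont : ContinuousOn (fun a : ℝ × ℝ => vhxz a.1 a.2) (Icc x0 x1 ×ˢ Icc y0 y1))
    (hvhzzcont : ContinuousOn (fun a : ℝ × ℝ => vhzz a.1 a.2) (Icc x0 x1 ×ˢ Icc y0 y1))
    (hvzzneg : ∀ x ∈ Icc x0 x1, ∀ z ∈ Icc y0 y1, vzz x z < 0)
    (hvhxzpos : ∀ x ∈ Icc x0 x1, ∀ z ∈ Icc y0 y1, 0 < vhxz x z)
    (hvhzzneg : ∀ x ∈ Icc x0 x1, ∀ z ∈ Icc y0 y1, vhzz x z < 0)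
    (hsc : SingleCrossingDominates (Icc x0 x1) (Icc y0 y1) vz vhz) :
    ∀ x ∈ Icc x0 x1, ∀ z ∈ Icc y0 y1, vxz x z / (-vzz x z) ≤ vhxz x z / (-vhzz x z) := by
  intro a ha b hb
  by_contra! hlt
  have hab : (a, b) ∈ Icc x0 x1 ×ˢ Icc y0 y1 := ⟨ha, hb⟩
  obtain ⟨s, hs_lo, hs_hi⟩ := exists_between hlt
  have hqh : 0 < -vhzz a b := neg_pos.2 (hvhzzneg a ha b hb)
  have hs : 0 < s := (div_pos (hvhxzpos a ha b hb) hqh).trans hs_lo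
  have hv : 0 < vxz a b + s * vzz a b := by
    have := (lt_div_iff₀ (neg_pos.2 (hvzzneg a ha b hb))).1 hs_hi
    linarith
  have hvh : 0 < -vhxz a b + s * -vhzz a b := by
    have := (div_lt_iff₀ hqh).1 hs_lo
    linarith
  obtain ⟨U, hU, hUpos⟩ := exists_mem_nhdsWithin_forall_add_pos
    (f := fun p : ℝ × ℝ => vxz p.1 p.2) (g := fun p : ℝ × ℝ => s * vzz p.1 p.2)
    (hvxzcont _ hab) (continuousWithinAt_const.mul (hvzzcont _ hab)) hv
  obtain ⟨V, hV, hVpos⟩ := exists_mem_nhdsWithin_forall_add_pos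
    (f := fun p : ℝ × ℝ => -vhxz p.1 p.2) (g := fun p : ℝ × ℝ => s * -vhzz p.1 p.2)
    (hvhxzcont _ hab).neg (continuousWithinAt_const.mul (hvhzzcont _ hab).neg) hvh
  obtain ⟨x, z, h, hh, hbox⟩ :=
    exists_box_subset_inter_of_mem_nhdsWithin hx hy ha hb hs (inter_mem hU hV)
  have hboxR := hbox.trans inter_subset_left
  have hup : vz x z < vz (x + h) (z + s * h) :=
    lt_of_forall_mem_box_add_mul_pos hvxz hvzz hh hs.le hboxR
      fun P hP Q hQ => hUpos P (hbox hP).2.1 Q (hbox hQ).2.1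
  have hdown : -vhz x z < -vhz (x + h) (z + s * h) :=
    lt_of_forall_mem_box_add_mul_pos (f := fun x z => -vhz x z)
      (fun x hx z hz => (hvhxz x hx z hz).neg) (fun x hx z hz => (hvhzz x hx z hz).neg)
      hh hs.le hboxR fun P hP Q hQ => hVpos P (hbox hP).2.2 Q (hbox hQ).2.2
  have hxh : x ≤ x + h := by linarith
  have hzh : z ≤ z + s * h := le_add_of_nonneg_right (by positivity)
  have h₀ := hboxR (mk_mem_prod (left_mem_Icc.2 hxh) (left_mem_Icc.2 hzh))
  have h₁ := hboxR (mk_mem_prod (right_mem_Icc.2 hxh) (right_mem_Icc.2 hzh))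
  have := hsc x h₀.1 _ h₁.1 hxh z h₀.2 _ h₁.2 hzh hup.le
  linarith

theorem singleCrossingDominates_of_const
    (hvxz : ∀ x ∈ Icc x0 x1, ∀ z ∈ Icc y0 y1, HasDerivAt (fun t => vz t z) (vxz x z) x)
    (hvzz : ∀ x ∈ Icc x0 x1, ∀ z ∈ Icc y0 y1, HasDerivAt (fun t => vz x t) (vzz x z) z)
    (hvhxz : ∀ x ∈ Icc x0 x1, ∀ z ∈ Icc y0 y1, HasDerivAt (fun t => vhz t z) (vhxz x z) x)
    (hvhzz : ∀ x ∈ Icc x0 x1, ∀ z ∈ Icc y0 y1, HasDerivAt (fun t => vhz x t) (vhzz x z) z)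
    {c : ℝ} (hc : 0 ≤ c)
    (hcx : ∀ x ∈ Icc x0 x1, ∀ z ∈ Icc y0 y1,
      c * vxz x z ≤ vhxz x z ∧ -vhzz x z ≤ -(c * vzz x z)) :
    SingleCrossingDominates (Icc x0 x1) (Icc y0 y1) vz vhz := by
  intro x hx x' hx' hxx' z hz z' hz' hzz' hv
  obtain ⟨ξ, hξ, η, hη, hw⟩ := exists_sub_eq_mul_add_mul_of_partials
    (f := fun x z => vhz x z - c * vz x z)
    (fun x hx z hz => (hvhxz x hx z hz).sub ((hvxz x hx z hz).const_mul c))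
    (fun x hx z hz => (hvhzz x hx z hz).sub ((hvzz x hx z hz).const_mul c))
    hx hx' hxx' hz hz' hzz'
  have hξ' := (hcx ξ (Icc_subset_Icc hx.1 hx'.2 hξ) z hz).1
  have hη' := (hcx x' hx' η (Icc_subset_Icc hz.1 hz'.2 hη)).2
  nlinarith [mul_nonneg (sub_nonneg.2 hxx') (sub_nonneg.2 hξ'),
    mul_nonneg (sub_nonneg.2 hzz') (by linarith : 0 ≤ vhzz x' η - c * vzz x' η),
    mul_nonneg hc (sub_nonneg.2 hv)]

end MRS

theorem mrs_single_crossing_equivalences_general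
    (x0 x1 y0 y1 : ℝ) (hx : x0 < x1) (hy : y0 < y1)
    -- `v` twice continuously differentiable, with derivative data
    (vz vxz vzz : ℝ → ℝ → ℝ)
    (hvxz : ∀ x ∈ Set.Icc x0 x1, ∀ z ∈ Set.Icc y0 y1,
      HasDerivAt (fun t => vz t z) (vxz x z) x)
    (hvzz : ∀ x ∈ Set.Icc x0 x1, ∀ z ∈ Set.Icc y0 y1,
      HasDerivAt (fun t => vz x t) (vzz x z) z)
    (hvxzcont : ContinuousOn (fun a : ℝ × ℝ => vxz a.1 a.2) (Set.Icc x0 x1 ×ˢ Set.Icc y0 y1))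
    (hvzzcont : ContinuousOn (fun a : ℝ × ℝ => vzz a.1 a.2) (Set.Icc x0 x1 ×ˢ Set.Icc y0 y1))
    (hvxzpos : ∀ x ∈ Set.Icc x0 x1, ∀ z ∈ Set.Icc y0 y1, 0 < vxz x z)
    (hvzzneg : ∀ x ∈ Set.Icc x0 x1, ∀ z ∈ Set.Icc y0 y1, vzz x z < 0)
    -- `v̂` twice continuously differentiable, with derivative data
    (vhz vhxz vhzz : ℝ → ℝ → ℝ)
    (hvhxz : ∀ x ∈ Set.Icc x0 x1, ∀ z ∈ Set.Icc y0 y1,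
      HasDerivAt (fun t => vhz t z) (vhxz x z) x)
    (hvhzz : ∀ x ∈ Set.Icc x0 x1, ∀ z ∈ Set.Icc y0 y1,
      HasDerivAt (fun t => vhz x t) (vhzz x z) z)
    (hvhxzcont : ContinuousOn (fun a : ℝ × ℝ => vhxz a.1 a.2) (Set.Icc x0 x1 ×ˢ Set.Icc y0 y1))
    (hvhzzcont : ContinuousOn (fun a : ℝ × ℝ => vhzz a.1 a.2) (Set.Icc x0 x1 ×ˢ Set.Icc y0 y1))
    (hvhxzpos : ∀ x ∈ Set.Icc x0 x1, ∀ z ∈ Set.Icc y0 y1, 0 < vhxz x z)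
    (hvhzzneg : ∀ x ∈ Set.Icc x0 x1, ∀ z ∈ Set.Icc y0 y1, vhzz x z < 0) :
    -- (i) the single-crossing condition implies the pointwise ratio comparison
    ((∀ x ∈ Set.Icc x0 x1, ∀ x' ∈ Set.Icc x0 x1, x ≤ x' →
        ∀ z ∈ Set.Icc y0 y1, ∀ z' ∈ Set.Icc y0 y1, z ≤ z' →
          vz x z ≤ vz x' z' → vhz x z ≤ vhz x' z') →
      ∀ x ∈ Set.Icc x0 x1, ∀ z ∈ Set.Icc y0 y1,
        vxz x z / (-vzz x z) ≤ vhxz x z / (-vhzz x z)) ∧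
    -- (ii) the two-point ratio comparison implies the single-crossing condition
    ((∀ x ∈ Set.Icc x0 x1, ∀ z ∈ Set.Icc y0 y1, ∀ x' ∈ Set.Icc x0 x1, ∀ z' ∈ Set.Icc y0 y1,
        vxz x z / (-vzz x' z') ≤ vhxz x z / (-vhzz x' z')) →
      (∀ x ∈ Set.Icc x0 x1, ∀ x' ∈ Set.Icc x0 x1, x ≤ x' →
        ∀ z ∈ Set.Icc y0 y1, ∀ z' ∈ Set.Icc y0 y1, z ≤ z' →
          vz x z ≤ vz x' z' → vhz x z ≤ vhz x' z')) ∧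
    -- (iii) the two-point ratio comparison is equivalent to a uniform constant `c > 0`
    ((∀ x ∈ Set.Icc x0 x1, ∀ z ∈ Set.Icc y0 y1, ∀ x' ∈ Set.Icc x0 x1, ∀ z' ∈ Set.Icc y0 y1,
        vxz x z / (-vzz x' z') ≤ vhxz x z / (-vhzz x' z')) ↔
      ∃ c : ℝ, 0 < c ∧ ∀ x ∈ Set.Icc x0 x1, ∀ z ∈ Set.Icc y0 y1,
        c * vxz x z ≤ vhxz x z ∧ -vhzz x z ≤ -(c * vzz x z)) := by
  have hS : (Icc x0 x1 ×ˢ Icc y0 y1).Nonempty :=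
    ⟨(x0, y0), left_mem_Icc.2 hx.le, left_mem_Icc.2 hy.le⟩
  have hiii := exists_const_iff_forall_div_le hS
    (f := fun p => vxz p.1 p.2) (g := fun p => -vzz p.1 p.2)
    (F := fun p => vhxz p.1 p.2) (G := fun p => -vhzz p.1 p.2)
    (fun p hp => hvxzpos p.1 hp.1 p.2 hp.2) (fun p hp => neg_pos.2 (hvzzneg p.1 hp.1 p.2 hp.2))
    (fun p hp => hvhxzpos p.1 hp.1 p.2 hp.2) (fun p hp => neg_pos.2 (hvhzzneg p.1 hp.1 p.2 hp.2))
  simp only [forall_prod_set, mul_neg] at hiii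
  refine ⟨div_le_div_of_singleCrossingDominates hx hy hvxz hvzz hvhxz hvhzz hvxzcont hvzzcont
    hvhxzcont hvhzzcont hvzzneg hvhxzpos hvhzzneg, fun h => ?_, hiii⟩
  obtain ⟨c, hc, hcx⟩ := hiii.1 h
  exact singleCrossingDominates_of_const hvxz hvzz hvhxz hvhzz hc.le hcx

/-- **Marginal-rate-of-substitution single-crossing equivalences** (Remark 3). -/
theorem mrs_single_crossing_equivalences
    (x0 x1 y0 y1 : ℝ) (hx : x0 < x1) (hy : y0 < y1)
    -- `v` twice continuously differentiable, with derivative data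
    (v vz vxz vzz : ℝ → ℝ → ℝ)
    (hvz : ∀ x ∈ Set.Icc x0 x1, ∀ z ∈ Set.Icc y0 y1,
      HasDerivAt (fun t => v x t) (vz x z) z)
    (hvxz : ∀ x ∈ Set.Icc x0 x1, ∀ z ∈ Set.Icc y0 y1,
      HasDerivAt (fun t => vz t z) (vxz x z) x)
    (hvzz : ∀ x ∈ Set.Icc x0 x1, ∀ z ∈ Set.Icc y0 y1,
      HasDerivAt (fun t => vz x t) (vzz x z) z)
    (hvxzcont : ContinuousOn (fun a : ℝ × ℝ => vxz a.1 a.2) (Set.Icc x0 x1 ×ˢ Set.Icc y0 y1))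
    (hvzzcont : ContinuousOn (fun a : ℝ × ℝ => vzz a.1 a.2) (Set.Icc x0 x1 ×ˢ Set.Icc y0 y1))
    (hvxzpos : ∀ x ∈ Set.Icc x0 x1, ∀ z ∈ Set.Icc y0 y1, 0 < vxz x z)
    (hvzzneg : ∀ x ∈ Set.Icc x0 x1, ∀ z ∈ Set.Icc y0 y1, vzz x z < 0)
    -- `v̂` twice continuously differentiable, with derivative data
    (vh vhz vhxz vhzz : ℝ → ℝ → ℝ)
    (hvhz : ∀ x ∈ Set.Icc x0 x1, ∀ z ∈ Set.Icc y0 y1,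
      HasDerivAt (fun t => vh x t) (vhz x z) z)
    (hvhxz : ∀ x ∈ Set.Icc x0 x1, ∀ z ∈ Set.Icc y0 y1,
      HasDerivAt (fun t => vhz t z) (vhxz x z) x)
    (hvhzz : ∀ x ∈ Set.Icc x0 x1, ∀ z ∈ Set.Icc y0 y1,
      HasDerivAt (fun t => vhz x t) (vhzz x z) z)
    (hvhxzcont : ContinuousOn (fun a : ℝ × ℝ => vhxz a.1 a.2) (Set.Icc x0 x1 ×ˢ Set.Icc y0 y1))
    (hvhzzcont : ContinuousOn (fun a : ℝ × ℝ => vhzz a.1 a.2) (Set.Icc x0 x1 ×ˢ Set.Icc y0 y1))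
    (hvhxzpos : ∀ x ∈ Set.Icc x0 x1, ∀ z ∈ Set.Icc y0 y1, 0 < vhxz x z)
    (hvhzzneg : ∀ x ∈ Set.Icc x0 x1, ∀ z ∈ Set.Icc y0 y1, vhzz x z < 0) :
    -- (i) the single-crossing condition implies the pointwise ratio comparison
    ((∀ x ∈ Set.Icc x0 x1, ∀ x' ∈ Set.Icc x0 x1, x ≤ x' →
        ∀ z ∈ Set.Icc y0 y1, ∀ z' ∈ Set.Icc y0 y1, z ≤ z' →
          vz x z ≤ vz x' z' → vhz x z ≤ vhz x' z') →
      ∀ x ∈ Set.Icc x0 x1, ∀ z ∈ Set.Icc y0 y1,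
        vxz x z / (-vzz x z) ≤ vhxz x z / (-vhzz x z)) ∧
    -- (ii) the two-point ratio comparison implies the single-crossing condition
    ((∀ x ∈ Set.Icc x0 x1, ∀ z ∈ Set.Icc y0 y1, ∀ x' ∈ Set.Icc x0 x1, ∀ z' ∈ Set.Icc y0 y1,
        vxz x z / (-vzz x' z') ≤ vhxz x z / (-vhzz x' z')) →
      (∀ x ∈ Set.Icc x0 x1, ∀ x' ∈ Set.Icc x0 x1, x ≤ x' →
        ∀ z ∈ Set.Icc y0 y1, ∀ z' ∈ Set.Icc y0 y1, z ≤ z' →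
          vz x z ≤ vz x' z' → vhz x z ≤ vhz x' z')) ∧
    -- (iii) the two-point ratio comparison is equivalent to a uniform constant `c > 0`
    ((∀ x ∈ Set.Icc x0 x1, ∀ z ∈ Set.Icc y0 y1, ∀ x' ∈ Set.Icc x0 x1, ∀ z' ∈ Set.Icc y0 y1,
        vxz x z / (-vzz x' z') ≤ vhxz x z / (-vhzz x' z')) ↔
      ∃ c : ℝ, 0 < c ∧ ∀ x ∈ Set.Icc x0 x1, ∀ z ∈ Set.Icc y0 y1,
        c * vxz x z ≤ vhxz x z ∧ -vhzz x z ≤ -(c * vzz x z)) :=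
  mrs_single_crossing_equivalences_general x0 x1 y0 y1 hx hy vz vxz vzz hvxz hvzz hvxzcont hvzzcont
    hvxzpos hvzzneg vhz vhxz vhzz hvhxz hvhzz hvhxzcont hvhzzcont hvhxzpos hvhzzneg
end

section
/- Strict single-dippedness of the equilibrium assignment under log-supermodularity: Suppose V(x,η) = v(x, ∫_Y m(x,y) dη(y)), where m : X × Y → ℝ is twice continuously differentiable with m_y > 0 everywhere, v : X × Z → ℝ is twice continuously differentiable with v_z > 0, v_zz < 0 and v_xz > 0 everywhere (Z a compact interval containing all values ∫_Y m(x,y) dη(y) for (x,η) ∈ X × Δ(Y)), and m_y is strictly log-supermodular: for every x ∈ X, the map y ↦ m_xy(x,y)/m_y(x,y) is strictly increasing on Y. Then for every competitive equilibrium (γ; p, q), the assignment γ is strictly single-dipped. -/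
open MeasureTheory Set
open scoped NNReal

noncomputable section

/-- The Kantorovich–Rubinstein distance between two Borel probability measures on a
metric space: `d_KR(η,η̂) = sup { ∫ f dη − ∫ f dη̂ : f 1-Lipschitz }`. -/
def krDist {Z : Type*} [MeasurableSpace Z] [MetricSpace Z]
    (η η' : ProbabilityMeasure Z) : ℝ :=
  sSup { d : ℝ | ∃ f : Z → ℝ, LipschitzWith 1 f ∧
    d = (∫ z, f z ∂(η : Measure Z)) - ∫ z, f z ∂(η' : Measure Z) }

/-- Borel σ-algebra on the space of probability measures with its weak topology. -/
instance instMeasurableSpaceProbabilityMeasure {Z : Type*} [MeasurableSpace Z]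
    [TopologicalSpace Z] [OpensMeasurableSpace Z] :
    MeasurableSpace (ProbabilityMeasure Z) := borel _

/-- The Dirac measure at `y` as a probability measure. -/
def diracPM (y : ℝ) : ProbabilityMeasure ℝ := ⟨Measure.dirac y, inferInstance⟩

/-- `Δ([a,b])`: probability measures on `ℝ` concentrated on `[a,b]`. -/
def DeltaOn (a b : ℝ) : Set (ProbabilityMeasure ℝ) :=
  {η : ProbabilityMeasure ℝ | (η : Measure ℝ) (Set.Icc a b)ᶜ = 0}

/-- An assignment for `(μ,ν)` (with `X = [x0,x1]`, `Y = [y0,y1]`): a probability measure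
on `X × Δ(Y)` whose `X`-marginal is `μ` and which averages to `ν`. -/
def IsAssignmentR (μ ν : Measure ℝ) (γ : Measure (ℝ × ProbabilityMeasure ℝ)) : Prop :=
  IsProbabilityMeasure γ ∧
  γ.map Prod.fst = μ ∧
  ∀ g : BoundedContinuousFunction ℝ ℝ,
    (∫ a, (∫ y, g y ∂(a.2 : Measure ℝ)) ∂γ) = ∫ y, g y ∂ν

/-- Competitive equilibrium on `X × Δ(Y)` with `X = [x0,x1]`, `Y = [y0,y1]`:
an assignment with Lipschitz prices, zero profits on the support, and no profitable entry. -/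
def IsCEIcc (x0 x1 y0 y1 : ℝ) (V : ℝ → ProbabilityMeasure ℝ → ℝ) (μ ν : Measure ℝ)
    (γ : Measure (ℝ × ProbabilityMeasure ℝ)) (p q : ℝ → ℝ) : Prop :=
  IsAssignmentR μ ν γ ∧
  (∃ K : ℝ≥0, LipschitzOnWith K p (Set.Icc x0 x1)) ∧
  (∃ K : ℝ≥0, LipschitzOnWith K q (Set.Icc y0 y1)) ∧
  (∀ a ∈ msupport γ, p a.1 + (∫ y, q y ∂(a.2 : Measure ℝ)) = V a.1 a.2) ∧
  (∀ x ∈ Set.Icc x0 x1, ∀ η ∈ DeltaOn y0 y1,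
    V x η ≤ p x + ∫ y, q y ∂(η : Measure ℝ))

/-- The PAS assignment: the law of `(x, δ_{S(x)})` when `x ∼ μ`. -/
def pasAssignment (μ : Measure ℝ) (S : ℝ → ℝ) : Measure (ℝ × ProbabilityMeasure ℝ) :=
  μ.map fun x => (x, diracPM (S x))


/-- An assignment `γ` is strictly single-dipped: there is a full-measure Borel set `X*`
and functions `ρ, T_d, T_u` such that on `X*` every matched workforce is a two-point
mixture `(1−ρ(x))δ_{T_d(x)} + ρ(x)δ_{T_u(x)}`, and for `x < x'` in `X*` neither `T_d(x')`
nor `T_u(x')` lies in the open interval `(T_d(x), T_u(x))`. -/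
def StrictlySingleDipped (x0 x1 y0 y1 : ℝ) (μ : Measure ℝ)
    (γ : Measure (ℝ × ProbabilityMeasure ℝ)) : Prop :=
  ∃ Xs : Set ℝ, MeasurableSet Xs ∧ Xs ⊆ Set.Icc x0 x1 ∧ μ Xs = 1 ∧
    ∃ ρ Td Tu : ℝ → ℝ,
      (∀ x ∈ Xs, ρ x ∈ Set.Icc (0:ℝ) 1 ∧ Td x ∈ Set.Icc y0 y1 ∧
        Tu x ∈ Set.Icc y0 y1 ∧ Td x ≤ Tu x) ∧
      (∀ a ∈ msupport γ, a.1 ∈ Xs →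
        (a.2 : Measure ℝ) = ENNReal.ofReal (1 - ρ a.1) • Measure.dirac (Td a.1)
          + ENNReal.ofReal (ρ a.1) • Measure.dirac (Tu a.1)) ∧
      (∀ x ∈ Xs, ∀ x' ∈ Xs, x < x' →
        Td x' ∉ Set.Ioo (Td x) (Tu x) ∧ Tu x' ∉ Set.Ioo (Td x) (Tu x))

/-!
At an equilibrium every firm type `x` maximizes its profit `v(x, ∫ m(x,·) dη) - ∫ q dη` over
workforces `η`. Perturbing an optimal `η` towards `δ_y` gives the first-order condition
`λ m(x,y) - q(y) ≤ λ z - ∫ q dη` with `z = ∫ m(x,·) dη` and `λ = v_z(x,z) > 0`; integrating it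
against any other optimal workforce and using strict concavity of `v(x,·)` shows that all optimal
workforces of `x` share the mean `z` and are carried by the set `C x` of maximizers of
`λ m(x,·) - q` on `Y`. For `x < x'`, strict log-supermodularity of `m_y` makes
`λ m(x,·) - λ' m(x',·)` change monotonicity at most once (from increasing to decreasing), so no
point of `C x'` lies strictly between two points of `C x`. Hence tagging each type whose `C x` has
three points with two rationals interleaving them is injective, so these types are countable and
`μ`-null; for all other types `C x ⊆ {min C x, max C x}` and the common mean fixes the weights.
-/

open Filter Topology
open scoped BoundedContinuousFunction

lemma ae_mem_Icc_of_mem_DeltaOn {a b : ℝ} {η : ProbabilityMeasure ℝ} (hη : η ∈ DeltaOn a b) :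
    ∀ᵐ y ∂(η : Measure ℝ), y ∈ Icc a b :=
  mem_ae_iff.2 hη

lemma integrable_of_mem_DeltaOn {a b : ℝ} {f : ℝ → ℝ} (hf : ContinuousOn f (Icc a b))
    {η : ProbabilityMeasure ℝ} (hη : η ∈ DeltaOn a b) : Integrable f η := by
  rw [← Measure.restrict_eq_self_of_ae_mem (ae_mem_Icc_of_mem_DeltaOn hη)]
  exact hf.integrableOn_compact isCompact_Icc

lemma integral_mem_Icc_of_mem_DeltaOn {a b z0 z1 : ℝ} {f : ℝ → ℝ} (hf : ContinuousOn f (Icc a b))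
    (hfZ : MapsTo f (Icc a b) (Icc z0 z1)) {η : ProbabilityMeasure ℝ} (hη : η ∈ DeltaOn a b) :
    ∫ y, f y ∂η ∈ Icc z0 z1 := by
  have hae := ae_mem_Icc_of_mem_DeltaOn hη
  constructor
  · simpa using integral_mono_ae (integrable_const z0) (integrable_of_mem_DeltaOn hf hη)
      (hae.mono fun y hy => (hfZ hy).1)
  · simpa using integral_mono_ae (integrable_of_mem_DeltaOn hf hη) (integrable_const z1)
      (hae.mono fun y hy => (hfZ hy).2)

lemma diracPM_mem_DeltaOn {a b y : ℝ} (hy : y ∈ Icc a b) : diracPM y ∈ DeltaOn a b := by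
  change Measure.dirac y (Icc a b)ᶜ = 0
  simp [Measure.dirac_apply' _ measurableSet_Icc.compl, hy]

def mixPM {Ω : Type*} [MeasurableSpace Ω] (t : unitInterval) (η η' : ProbabilityMeasure Ω) :
    ProbabilityMeasure Ω :=
  ⟨ENNReal.ofReal (1 - t) • (η : Measure Ω) + ENNReal.ofReal t • (η' : Measure Ω),
    ⟨by simp [← ENNReal.ofReal_add (sub_nonneg.2 t.2.2) t.2.1]⟩⟩

lemma mixPM_mem_DeltaOn {a b : ℝ} (t : unitInterval) {η η' : ProbabilityMeasure ℝ}
    (hη : η ∈ DeltaOn a b) (hη' : η' ∈ DeltaOn a b) : mixPM t η η' ∈ DeltaOn a b := by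
  change (ENNReal.ofReal (1 - t) • (η : Measure ℝ) + ENNReal.ofReal t • (η' : Measure ℝ))
    (Icc a b)ᶜ = 0
  simp [show (η : Measure ℝ) (Icc a b)ᶜ = 0 from hη, show (η' : Measure ℝ) (Icc a b)ᶜ = 0 from hη']

lemma integral_mixPM {Ω : Type*} [MeasurableSpace Ω] (t : unitInterval)
    {η η' : ProbabilityMeasure Ω} {f : Ω → ℝ} (hf : Integrable f η) (hf' : Integrable f η') :
    ∫ y, f y ∂(mixPM t η η') = (1 - t) * ∫ y, f y ∂η + t * ∫ y, f y ∂η' := by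
  simp only [mixPM, ProbabilityMeasure.coe_mk]
  rw [integral_add_measure (hf.smul_measure ENNReal.ofReal_ne_top)
    (hf'.smul_measure ENNReal.ofReal_ne_top), integral_smul_measure, integral_smul_measure,
    ENNReal.toReal_ofReal (sub_nonneg.2 t.2.2), ENNReal.toReal_ofReal t.2.1, smul_eq_mul,
    smul_eq_mul]

lemma eq_smul_dirac_add_smul_dirac {Ω : Type*} [MeasurableSpace Ω] [MeasurableSingletonClass Ω]
    {η : Measure Ω} {a b : Ω} (hab : a ≠ b) (hη : η {a, b}ᶜ = 0) :
    η = η {a} • Measure.dirac a + η {b} • Measure.dirac b := by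
  rw [← Measure.restrict_singleton, ← Measure.restrict_singleton,
    ← Measure.restrict_union (disjoint_singleton.2 hab) (measurableSet_singleton b),
    singleton_union]
  exact (Measure.restrict_eq_self_of_ae_mem (mem_ae_iff.2 hη)).symm

lemma eq_two_point_of_integral_eq {Ω : Type*} [MeasurableSpace Ω] [MeasurableSingletonClass Ω]
    {η : Measure Ω} [IsProbabilityMeasure η] {a b : Ω} {z : ℝ} {w : Ω → ℝ}
    (hw : a ≠ b → w a ≠ w b) (hη : η {a, b}ᶜ = 0) (hz : ∫ y, w y ∂η = z) :
    (z - w a) / (w b - w a) ∈ Icc (0 : ℝ) 1 ∧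
      η = ENNReal.ofReal (1 - (z - w a) / (w b - w a)) • Measure.dirac a
        + ENNReal.ofReal ((z - w a) / (w b - w a)) • Measure.dirac b := by
  by_cases hab : a = b
  · -- the weight is `0` here, by division by zero
    subst hab
    rw [pair_eq_singleton] at hη
    have hdirac : η = Measure.dirac a := by
      rw [← Measure.restrict_eq_self_of_ae_mem (s := {a}) (mem_ae_iff.2 hη),
        Measure.restrict_singleton, (prob_compl_eq_zero_iff (measurableSet_singleton a)).1 hη,
        one_smul]
    simp [hdirac]
  have hdecomp := eq_smul_dirac_add_smul_dirac hab hη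
  have hsum : (η {a}).toReal + (η {b}).toReal = 1 := by
    have := congrArg (fun ξ : Measure Ω => (ξ univ).toReal) hdecomp
    simpa [ENNReal.toReal_add] using this.symm
  have hint : ∫ y, w y ∂η = (η {a}).toReal * w a + (η {b}).toReal * w b := by
    conv_lhs => rw [hdecomp]
    rw [integral_add_measure ((integrable_dirac (by simp)).smul_measure (measure_ne_top _ _))
        ((integrable_dirac (by simp)).smul_measure (measure_ne_top _ _))]
    simp only [integral_smul_measure, integral_dirac, smul_eq_mul]
  have hweight : (z - w a) / (w b - w a) = (η {b}).toReal := by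
    rw [div_eq_iff (sub_ne_zero.2 (hw hab).symm), ← hz, hint]
    linear_combination (w a) * hsum
  rw [hweight]
  refine ⟨⟨ENNReal.toReal_nonneg, by linarith [(η {a}).toReal_nonneg]⟩, ?_⟩
  rw [← hsum, add_sub_cancel_right, ENNReal.ofReal_toReal (measure_ne_top _ _),
    ENNReal.ofReal_toReal (measure_ne_top _ _)]
  exact hdecomp

lemma HasPosDensityCDF.continuousOn_cdfOf {a b : ℝ} {μ : Measure ℝ} (hμ : HasPosDensityCDF a b μ)
    (hab : a ≤ b) : ContinuousOn (cdfOf μ) (Icc a b) := by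
  obtain ⟨-, -, f, hf, -, hcdf⟩ := hμ
  have hprim := intervalIntegral.continuousOn_primitive_interval (μ := volume)
    (a := a) (b := b) (f := f) (by rw [uIcc_of_le hab]; exact hf.integrableOn_Icc)
  rw [uIcc_of_le hab] at hprim
  exact hprim.congr hcdf

lemma HasPosDensityCDF.measure_singleton {a b : ℝ} {μ : Measure ℝ}
    (hμ : HasPosDensityCDF a b μ) (t : ℝ) : μ {t} = 0 := by
  have hprob := hμ.1
  by_cases ht : t ∈ Icc a b
  swap
  · exact measure_mono_null (singleton_subset_iff.2 ht) hμ.2.1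
  rcases ht.1.eq_or_lt with rfl | hat
  · have hcdf : cdfOf μ a = 0 := by rw [hμ.2.2.choose_spec.2.2 a ht, intervalIntegral.integral_same]
    refine measure_mono_null (singleton_subset_iff.2 (mem_Iic.2 le_rfl)) ?_
    exact (ENNReal.toReal_eq_zero_iff _).1 hcdf |>.resolve_right (measure_ne_top _ _)
  have hjump : ∀ s < t, (μ {t}).toReal ≤ cdfOf μ t - cdfOf μ s := by
    intro s hst
    calc (μ {t}).toReal ≤ (μ (Iic t \ Iic s)).toReal :=
          ENNReal.toReal_mono (measure_ne_top _ _) (measure_mono (by simp [hst]))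
      _ = cdfOf μ t - cdfOf μ s := by
          rw [measure_sdiff (Iic_subset_Iic.2 hst.le) measurableSet_Iic.nullMeasurableSet
            (measure_ne_top _ _), ENNReal.toReal_sub_of_le (measure_mono (Iic_subset_Iic.2 hst.le))
            (measure_ne_top _ _)]
          rfl
  have hleft : Tendsto (fun s => cdfOf μ t - cdfOf μ s) (𝓝[<] t) (𝓝 0) := by
    have hcont := (hμ.continuousOn_cdfOf (ht.1.trans ht.2) t ht).mono_of_mem_nhdsWithin
      (mem_of_superset (Ico_mem_nhdsLT hat) (Ico_subset_Icc_self.trans (Icc_subset_Icc_right ht.2)))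
    simpa using (tendsto_const_nhds (x := cdfOf μ t)).sub hcont.tendsto
  have hle : (μ {t}).toReal ≤ 0 :=
    ge_of_tendsto hleft (eventually_nhdsWithin_of_forall fun s hs => hjump s hs)
  exact (ENNReal.toReal_eq_zero_iff _).1 (le_antisymm hle ENNReal.toReal_nonneg)
    |>.resolve_right (measure_ne_top _ _)

instance instBorelSpaceProbabilityMeasure {Ω : Type*} [MeasurableSpace Ω] [TopologicalSpace Ω]
    [OpensMeasurableSpace Ω] : BorelSpace (ProbabilityMeasure Ω) := ⟨rfl⟩

lemma mem_of_mem_msupport_s18 {Z : Type*} [TopologicalSpace Z] [MeasurableSpace Z] {γ : Measure Z}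
    {s : Set Z} (hs : IsClosed s) (hγ : γ sᶜ = 0) {a : Z} (ha : a ∈ msupport γ) : a ∈ s := by
  by_contra h
  exact (ha _ hs.isOpen_compl h).ne' hγ

lemma snd_mem_DeltaOn_of_mem_msupport {γ : Measure (ℝ × ProbabilityMeasure ℝ)}
    [IsFiniteMeasure γ] {ν : Measure ℝ} {a b : ℝ} (hab : a ≤ b)
    (havg : ∀ g : ℝ →ᵇ ℝ, ∫ p, ∫ y, g y ∂(p.2 : Measure ℝ) ∂γ = ∫ y, g y ∂ν)
    (hν : ν (Icc a b)ᶜ = 0) {x : ℝ × ProbabilityMeasure ℝ} (hx : x ∈ msupport γ) :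
    x.2 ∈ DeltaOn a b := by
  set g : ℝ →ᵇ ℝ := .ofNormedAddCommGroup (fun y => min (Metric.infDist y (Icc a b)) 1)
    ((Metric.continuous_infDist_pt _).min continuous_const) 1 fun y => by
      rw [Real.norm_of_nonneg (le_min Metric.infDist_nonneg zero_le_one)]
      exact min_le_right _ _
  have hg_nonneg (y : ℝ) : 0 ≤ g y := le_min Metric.infDist_nonneg zero_le_one
  have hg_zero {y : ℝ} (hy : y ∈ Icc a b) : g y = 0 := by
    simp [g, Metric.infDist_zero_of_mem hy]
  have hg_pos {y : ℝ} (hy : y ∉ Icc a b) : 0 < g y :=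
    lt_min ((isClosed_Icc.notMem_iff_infDist_pos (nonempty_Icc.2 hab)).1 hy) zero_lt_one
  set F : ℝ × ProbabilityMeasure ℝ → ℝ := fun p => ∫ y, g y ∂(p.2 : Measure ℝ)
  have hF : Continuous F :=
    (ProbabilityMeasure.continuous_integral_boundedContinuousFunction g).comp continuous_snd
  have hF_nonneg : 0 ≤ F := fun p => integral_nonneg hg_nonneg
  have hF_int : Integrable F γ :=
    (integrable_const (1 : ℝ)).mono' hF.aestronglyMeasurable (ae_of_all _ fun p =>
      (g.norm_integral_le_norm _).trans (g.norm_le zero_le_one |>.2 fun y => by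
        rw [Real.norm_of_nonneg (hg_nonneg y)]; exact min_le_right _ _))
  have hF_ae : F =ᵐ[γ] 0 := by
    refine (integral_eq_zero_iff_of_nonneg hF_nonneg hF_int).1 ?_
    have hνY : ∀ᵐ y ∂ν, y ∈ Icc a b := mem_ae_iff.2 hν
    rw [havg g]
    exact integral_eq_zero_of_ae (hνY.mono fun y hy => hg_zero hy)
  have hFx : F x = 0 := mem_of_mem_msupport_s18 (s := F ⁻¹' {0})
    (isClosed_singleton.preimage hF) (mem_ae_iff.1 hF_ae) hx
  have hg_ae := (integral_eq_zero_iff_of_nonneg hg_nonneg (g.integrable _)).1 hFx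
  exact measure_mono_null (fun y hy => (hg_pos hy).ne') (ae_iff.1 hg_ae)

lemma IsCEIcc.isMaxOn_of_mem_msupport {x0 x1 y0 y1 : ℝ} {V : ℝ → ProbabilityMeasure ℝ → ℝ}
    {μ ν : Measure ℝ} {γ : Measure (ℝ × ProbabilityMeasure ℝ)} {p q : ℝ → ℝ}
    (hce : IsCEIcc x0 x1 y0 y1 V μ ν γ p q) (hy : y0 ≤ y1) (hμ : μ (Icc x0 x1)ᶜ = 0)
    (hν : ν (Icc y0 y1)ᶜ = 0) {a : ℝ × ProbabilityMeasure ℝ} (ha : a ∈ msupport γ) :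
    a.1 ∈ Icc x0 x1 ∧ a.2 ∈ DeltaOn y0 y1 ∧
      IsMaxOn (fun η => V a.1 η - ∫ y, q y ∂(η : Measure ℝ)) (DeltaOn y0 y1) a.2 := by
  obtain ⟨⟨hγ, hmarg, havg⟩, -, -, hzero, hentry⟩ := hce
  have hX : a.1 ∈ Icc x0 x1 := mem_of_mem_msupport_s18 (s := Prod.fst ⁻¹' Icc x0 x1)
    (isClosed_Icc.preimage continuous_fst)
    (by rw [← preimage_compl, ← Measure.map_apply measurable_fst measurableSet_Icc.compl, hmarg,
      hμ])
    ha
  refine ⟨hX, snd_mem_DeltaOn_of_mem_msupport hy havg hν ha, fun η hη => ?_⟩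
  have h1 := hentry a.1 hX η hη
  have h2 := hzero a ha
  simp only [mem_ofPred_eq]
  linarith

lemma HasDerivAt.nonpos_of_isMaxOn_Icc {φ : ℝ → ℝ} {φ' : ℝ} (hφ : HasDerivAt φ φ' 0)
    (hmax : IsMaxOn φ (Icc 0 1) 0) : φ' ≤ 0 := by
  simpa using hmax.localize.hasFDerivWithinAt_nonpos hφ.hasDerivWithinAt.hasFDerivWithinAt
    (mem_posTangentConeAt_of_segment_subset (x := 0) (y := 1) (by simp [segment_eq_Icc]))

lemma strictConcaveOn_Icc_of_hasDerivAt {a b : ℝ} {u u' u'' : ℝ → ℝ}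
    (hu : ∀ z ∈ Icc a b, HasDerivAt u (u' z) z) (hu' : ∀ z ∈ Icc a b, HasDerivAt u' (u'' z) z)
    (hneg : ∀ z ∈ Icc a b, u'' z < 0) : StrictConcaveOn ℝ (Icc a b) u := by
  have hanti : StrictAntiOn u' (Ioo a b) :=
    strictAntiOn_of_hasDerivWithinAt_neg (convex_Ioo a b)
      (fun z hz => (hu' z (Ioo_subset_Icc_self hz)).continuousAt.continuousWithinAt)
      (fun z hz => (hu' z (Ioo_subset_Icc_self (interior_subset hz))).hasDerivWithinAt)
      (fun z hz => hneg z (Ioo_subset_Icc_self (interior_subset hz)))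
  refine StrictAntiOn.strictConcaveOn_of_deriv (convex_Icc a b)
    (fun z hz => (hu z hz).continuousAt.continuousWithinAt) ?_
  rw [interior_Icc]
  intro s hs t ht hst
  rw [(hu s (Ioo_subset_Icc_self hs)).deriv, (hu t (Ioo_subset_Icc_self ht)).deriv]
  exact hanti hs ht hst

lemma StrictConcaveOn.lt_add_mul_sub_of_hasDerivAt {S : Set ℝ} {u : ℝ → ℝ} {u' x y : ℝ}
    (hu : StrictConcaveOn ℝ S u) (hx : x ∈ S) (hy : y ∈ S) (hxy : y ≠ x)
    (hd : HasDerivAt u u' x) : u y < u x + u' * (y - x) := by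
  rcases hxy.lt_or_gt with h | h
  · have := hu.lt_slope_of_hasDerivAt hy hx h hd
    rw [slope_def_field, lt_div_iff₀ (sub_pos.2 h)] at this
    linarith
  · have := hu.slope_lt_of_hasDerivAt hx hy h hd
    rw [slope_def_field, div_lt_iff₀ (sub_pos.2 h)] at this
    linarith

def firmProfit (u w c : ℝ → ℝ) (η : ProbabilityMeasure ℝ) : ℝ :=
  u (∫ y, w y ∂(η : Measure ℝ)) - ∫ y, c y ∂(η : Measure ℝ)

section FirmProblem

variable {y0 y1 : ℝ} {u w c : ℝ → ℝ} {η η' : ProbabilityMeasure ℝ}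

theorem IsMaxOn.firmProfit_foc (hw : ContinuousOn w (Icc y0 y1)) (hc : ContinuousOn c (Icc y0 y1))
    (hη : η ∈ DeltaOn y0 y1) (hmax : IsMaxOn (firmProfit u w c) (DeltaOn y0 y1) η) {u' : ℝ}
    (hu : HasDerivAt u u' (∫ y, w y ∂(η : Measure ℝ))) :
    ∀ y ∈ Icc y0 y1,
      u' * w y - c y ≤ u' * ∫ y, w y ∂(η : Measure ℝ) - ∫ y, c y ∂(η : Measure ℝ) := by
  intro y hy
  set z := ∫ y, w y ∂(η : Measure ℝ)
  set C := ∫ y, c y ∂(η : Measure ℝ)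
  -- the profit along the segment from `η` towards `δ_y`
  set φ : ℝ → ℝ := fun t => u (z + t * (w y - z)) - (C + t * (c y - C))
  have hφ : HasDerivAt φ (u' * (w y - z) - (c y - C)) 0 := by
    have hline := ((hasDerivAt_id (0 : ℝ)).mul_const (w y - z)).const_add z
    have hcost := ((hasDerivAt_id (0 : ℝ)).mul_const (c y - C)).const_add C
    simp only [id, one_mul] at hline hcost
    exact (HasDerivAt.comp_of_eq 0 hu hline (by simp)).sub hcost
  have hφmax : IsMaxOn φ (Icc 0 1) 0 := by
    intro t ht
    have hdirac : diracPM y ∈ DeltaOn y0 y1 := diracPM_mem_DeltaOn hy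
    have hmean {f : ℝ → ℝ} (hf : ContinuousOn f (Icc y0 y1)) :
        ∫ s, f s ∂(mixPM ⟨t, ht⟩ η (diracPM y) : Measure ℝ)
          = ∫ s, f s ∂(η : Measure ℝ) + t * (f y - ∫ s, f s ∂(η : Measure ℝ)) := by
      rw [integral_mixPM _ (integrable_of_mem_DeltaOn hf hη) (integrable_of_mem_DeltaOn hf hdirac)]
      simp only [diracPM, ProbabilityMeasure.coe_mk, integral_dirac]
      ring
    have hmix := hmax (mixPM_mem_DeltaOn ⟨t, ht⟩ hη hdirac)
    simp only [mem_ofPred_eq, firmProfit, hmean hw, hmean hc] at hmix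
    simpa [φ] using hmix
  have := hφ.nonpos_of_isMaxOn_Icc hφmax
  linarith

lemma measure_compl_setOf_isMaxOn_eq_zero {f : ℝ → ℝ} {K : ℝ} (hf : ContinuousOn f (Icc y0 y1))
    (hη : η ∈ DeltaOn y0 y1) (hK : ∀ y ∈ Icc y0 y1, f y ≤ K)
    (hmean : ∫ y, f y ∂(η : Measure ℝ) = K) :
    (η : Measure ℝ) {y ∈ Icc y0 y1 | IsMaxOn f (Icc y0 y1) y}ᶜ = 0 := by
  have hY := ae_mem_Icc_of_mem_DeltaOn hη
  have hint := integrable_of_mem_DeltaOn hf hη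
  have hgap : ∫ y, (K - f y) ∂(η : Measure ℝ) = 0 := by
    rw [integral_sub (integrable_const K) hint, hmean]
    simp
  have hgap_ae := (integral_eq_zero_iff_of_nonneg_ae (hY.mono fun y hy => sub_nonneg.2 (hK y hy))
    ((integrable_const K).sub hint)).1 hgap
  have hmax : ∀ᵐ y ∂(η : Measure ℝ), y ∈ {y ∈ Icc y0 y1 | IsMaxOn f (Icc y0 y1) y} := by
    filter_upwards [hY, hgap_ae] with y hy hy0
    have hfy : f y = K := by simpa [sub_eq_zero, eq_comm] using hy0
    exact ⟨hy, fun y' hy' => hfy ▸ hK y' hy'⟩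
  exact mem_ae_iff.1 hmax

theorem IsMaxOn.integral_eq_and_measure_compl_setOf_isMaxOn_eq_zero {z0 z1 u' : ℝ}
    (hw : ContinuousOn w (Icc y0 y1)) (hc : ContinuousOn c (Icc y0 y1))
    (hwZ : MapsTo w (Icc y0 y1) (Icc z0 z1)) (hu : StrictConcaveOn ℝ (Icc z0 z1) u)
    (hη : η ∈ DeltaOn y0 y1) (hmax : IsMaxOn (firmProfit u w c) (DeltaOn y0 y1) η)
    (hη' : η' ∈ DeltaOn y0 y1) (hmax' : IsMaxOn (firmProfit u w c) (DeltaOn y0 y1) η')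
    (hu' : HasDerivAt u u' (∫ y, w y ∂(η' : Measure ℝ))) :
    ∫ y, w y ∂(η : Measure ℝ) = ∫ y, w y ∂(η' : Measure ℝ) ∧
      (η : Measure ℝ) {y ∈ Icc y0 y1 | IsMaxOn (fun t => u' * w t - c t) (Icc y0 y1) y}ᶜ = 0 := by
  set z := ∫ y, w y ∂(η : Measure ℝ)
  set z' := ∫ y, w y ∂(η' : Measure ℝ)
  set C := ∫ y, c y ∂(η : Measure ℝ)
  set C' := ∫ y, c y ∂(η' : Measure ℝ)
  have hfoc := hmax'.firmProfit_foc hw hc hη' hu'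
  have hmean : ∫ y, (u' * w y - c y) ∂(η : Measure ℝ) = u' * z - C := by
    rw [integral_sub ((integrable_of_mem_DeltaOn hw hη).const_mul u')
      (integrable_of_mem_DeltaOn hc hη), integral_const_mul]
  have hfoc_mean : u' * z - C ≤ u' * z' - C' := by
    rw [← hmean]
    simpa using integral_mono_ae ((integrable_of_mem_DeltaOn (hw.const_smul u') hη).sub
      (integrable_of_mem_DeltaOn hc hη)) (integrable_const (u' * z' - C'))
      ((ae_mem_Icc_of_mem_DeltaOn hη).mono hfoc)
  have hprofit : u z - C = u z' - C' := le_antisymm (hmax' hη) (hmax hη')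
  have hz : z = z' := by
    by_contra hne
    have := hu.lt_add_mul_sub_of_hasDerivAt (integral_mem_Icc_of_mem_DeltaOn hw hwZ hη')
      (integral_mem_Icc_of_mem_DeltaOn hw hwZ hη) hne hu'
    linarith
  have hC : C = C' := by
    rw [hz] at hprofit
    linarith
  exact ⟨hz, measure_compl_setOf_isMaxOn_eq_zero ((hw.const_smul u').sub hc) hη hfoc
    (by rw [hmean, hz, hC])⟩

end FirmProblem

theorem strictAntiOn_div_of_strictMonoOn_div {x0 x1 y0 y1 : ℝ} {f f' : ℝ → ℝ → ℝ}
    (hf' : ∀ x ∈ Icc x0 x1, ∀ y ∈ Icc y0 y1, HasDerivAt (fun t => f t y) (f' x y) x)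
    (hpos : ∀ x ∈ Icc x0 x1, ∀ y ∈ Icc y0 y1, 0 < f x y)
    (hmono : ∀ x ∈ Icc x0 x1, StrictMonoOn (fun y => f' x y / f x y) (Icc y0 y1))
    {x x' : ℝ} (hx : x ∈ Icc x0 x1) (hx' : x' ∈ Icc x0 x1) (hxx' : x < x') :
    StrictAntiOn (fun y => f x y / f x' y) (Icc y0 y1) := by
  intro y hy y' hy' hyy'
  have hlog (y : ℝ) (hy : y ∈ Icc y0 y1) (t : ℝ) (ht : t ∈ Icc x0 x1) :
      HasDerivAt (fun s => Real.log (f s y)) (f' t y / f t y) t :=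
    (hf' t ht y hy).log (hpos t ht y hy).ne'
  have hG : StrictMonoOn (fun t => Real.log (f t y') - Real.log (f t y)) (Icc x0 x1) := by
    refine strictMonoOn_of_hasDerivWithinAt_pos (convex_Icc x0 x1)
      (fun t ht => ((hlog y' hy' t ht).sub (hlog y hy t ht)).continuousAt.continuousWithinAt)
      (fun t ht => ((hlog y' hy' t (interior_subset ht)).sub
        (hlog y hy t (interior_subset ht))).hasDerivWithinAt) (fun t ht => ?_)
    exact sub_pos.2 (hmono t (interior_subset ht) hy hy' hyy')
  have := hG hx hx' hxx'
  simp only at this ⊢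
  rw [← Real.log_lt_log_iff (div_pos (hpos x hx y' hy') (hpos x' hx' y' hy'))
    (div_pos (hpos x hx y hy) (hpos x' hx' y hy)), Real.log_div (hpos x hx y' hy').ne'
    (hpos x' hx' y' hy').ne', Real.log_div (hpos x hx y hy).ne' (hpos x' hx' y hy).ne']
  linarith

theorem min_lt_of_hasDerivAt_of_signChange {a b y : ℝ} {d D : ℝ → ℝ}
    (hd : ∀ t ∈ Icc a b, HasDerivAt d (D t) t)
    (hD : ∀ s ∈ Icc a b, ∀ t ∈ Icc a b, s < t → D s ≤ 0 → D t < 0) (hy : y ∈ Ioo a b) :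
    min (d a) (d b) < d y := by
  by_contra! h
  have hsub₁ : Icc a y ⊆ Icc a b := Icc_subset_Icc_right hy.2.le
  have hsub₂ : Icc y b ⊆ Icc a b := Icc_subset_Icc_left hy.1.le
  obtain ⟨s, hs, hDs⟩ := exists_hasDerivAt_eq_slope d D hy.1
    (fun t ht => (hd t (hsub₁ ht)).continuousAt.continuousWithinAt)
    (fun t ht => hd t (hsub₁ (Ioo_subset_Icc_self ht)))
  obtain ⟨t, ht, hDt⟩ := exists_hasDerivAt_eq_slope d D hy.2
    (fun t ht => (hd t (hsub₂ ht)).continuousAt.continuousWithinAt)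
    (fun t ht => hd t (hsub₂ (Ioo_subset_Icc_self ht)))
  have hs_nonpos : D s ≤ 0 := by
    rw [hDs]
    exact div_nonpos_of_nonpos_of_nonneg (by linarith [min_le_left (d a) (d b)])
      (by linarith [hy.1])
  have ht_nonneg : 0 ≤ D t := by
    rw [hDt]
    exact div_nonneg (by linarith [min_le_right (d a) (d b)]) (by linarith [hy.2])
  exact (hD s (hsub₁ (Ioo_subset_Icc_self hs)) t (hsub₂ (Ioo_subset_Icc_self ht))
    (hs.2.trans ht.1) hs_nonpos).not_ge ht_nonneg

theorem notMem_Ioo_of_isMaxOn {x0 x1 y0 y1 : ℝ} {m my mxy : ℝ → ℝ → ℝ} {q : ℝ → ℝ}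
    (hmy : ∀ x ∈ Icc x0 x1, ∀ y ∈ Icc y0 y1, HasDerivAt (fun t => m x t) (my x y) y)
    (hmxy : ∀ x ∈ Icc x0 x1, ∀ y ∈ Icc y0 y1, HasDerivAt (fun t => my t y) (mxy x y) x)
    (hmypos : ∀ x ∈ Icc x0 x1, ∀ y ∈ Icc y0 y1, 0 < my x y)
    (hlsm : ∀ x ∈ Icc x0 x1, StrictMonoOn (fun y => mxy x y / my x y) (Icc y0 y1))
    {x x' lam lam' : ℝ} (hx : x ∈ Icc x0 x1) (hx' : x' ∈ Icc x0 x1) (hxx' : x < x')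
    (hlam : 0 < lam) {a b y : ℝ} (ha : a ∈ Icc y0 y1) (hb : b ∈ Icc y0 y1) (hy : y ∈ Icc y0 y1)
    (hmax_a : IsMaxOn (fun t => lam * m x t - q t) (Icc y0 y1) a)
    (hmax_b : IsMaxOn (fun t => lam * m x t - q t) (Icc y0 y1) b)
    (hmax_y : IsMaxOn (fun t => lam' * m x' t - q t) (Icc y0 y1) y) : y ∉ Ioo a b := by
  intro hyab
  have hsub : Icc a b ⊆ Icc y0 y1 := Icc_subset_Icc ha.1 hb.2
  have hratio := strictAntiOn_div_of_strictMonoOn_div hmxy hmypos hlsm hx hx' hxx'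
  have hcross : ∀ s ∈ Icc a b, ∀ t ∈ Icc a b, s < t →
      lam * my x s - lam' * my x' s ≤ 0 → lam * my x t - lam' * my x' t < 0 := by
    intro s hs t ht hst hDs
    have hs_pos := hmypos x' hx' s (hsub hs)
    have ht_pos := hmypos x' hx' t (hsub ht)
    have h1 : lam * (my x s / my x' s) ≤ lam' := by
      rw [mul_div_assoc', div_le_iff₀ hs_pos]
      linarith
    have h2 : lam * (my x t / my x' t) < lam' :=
      (mul_lt_mul_of_pos_left (hratio (hsub hs) (hsub ht) hst) hlam).trans_le h1
    rw [mul_div_assoc', div_lt_iff₀ ht_pos] at h2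
    linarith
  refine (min_lt_of_hasDerivAt_of_signChange (d := fun t => lam * m x t - lam' * m x' t)
    (fun t ht => ((hmy x hx t (hsub ht)).const_mul lam).sub
      ((hmy x' hx' t (hsub ht)).const_mul lam')) hcross hyab).not_ge (le_min ?_ ?_)
  · have h1 := hmax_a hy
    have h2 := hmax_y ha
    simp only [mem_ofPred_eq] at h1 h2
    linarith
  · have h1 := hmax_b hy
    have h2 := hmax_y hb
    simp only [mem_ofPred_eq] at h1 h2
    linarith

lemma countable_setOf_exists_mem_Ioo {S : Set ℝ} {C : ℝ → Set ℝ}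
    (h : ∀ x ∈ S, ∀ x' ∈ S, x < x' → ∀ a ∈ C x, ∀ b ∈ C x, ∀ y ∈ C x', y ∉ Ioo a b) :
    {x ∈ S | ∃ a ∈ C x, ∃ b ∈ C x, ∃ y ∈ C x, y ∈ Ioo a b}.Countable := by
  set B := {x ∈ S | ∃ a ∈ C x, ∃ b ∈ C x, ∃ y ∈ C x, y ∈ Ioo a b}
  have hrat : ∀ x ∈ B, ∃ r : ℚ × ℚ, ∃ a ∈ C x, ∃ b ∈ C x, ∃ y ∈ C x,
      a < r.1 ∧ r.1 < y ∧ y < r.2 ∧ r.2 < b := by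
    rintro x ⟨-, a, ha, b, hb, y, hy, hay, hyb⟩
    obtain ⟨r₁, har, hry⟩ := exists_rat_btwn hay
    obtain ⟨r₂, hyr, hrb⟩ := exists_rat_btwn hyb
    exact ⟨(r₁, r₂), a, ha, b, hb, y, hy, har, hry, hyr, hrb⟩
  choose! R hR using hrat
  have hne : ∀ x ∈ B, ∀ x' ∈ B, x < x' → R x ≠ R x' := by
    intro x hx x' hx' hlt heq
    obtain ⟨a, ha, b, hb, -, -, har, -, -, hrb⟩ := hR x hx
    obtain ⟨-, -, -, -, y, hy, -, hry, hyr, -⟩ := hR x' hx'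
    rw [heq] at har hrb
    exact h x hx.1 x' hx'.1 hlt a ha b hb y hy ⟨har.trans hry, hyr.trans hrb⟩
  refine (mapsTo_univ R B).countable_of_injOn (fun x hx x' hx' heq => ?_) countable_univ
  rcases lt_trichotomy x x' with hlt | heq' | hgt
  · exact absurd heq (hne x hx x' hx' hlt)
  · exact heq'
  · exact absurd heq.symm (hne x' hx' x hx hgt)

lemma isClosed_setOf_isMaxOn {α : Type*} [TopologicalSpace α] {s : Set α} {f : α → ℝ}
    (hs : IsClosed s) (hf : ContinuousOn f s) : IsClosed {y ∈ s | IsMaxOn f s y} := by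
  have : {y ∈ s | IsMaxOn f s y} = s ∩ ⋂ y' ∈ s, s ∩ f ⁻¹' Ici (f y') := by
    ext y
    simp only [mem_sep_iff, isMaxOn_iff, mem_inter_iff, mem_iInter, mem_preimage, mem_Ici]
    exact ⟨fun ⟨hy, h⟩ => ⟨hy, fun y' hy' => ⟨hy, h y' hy'⟩⟩,
      fun ⟨hy, h⟩ => ⟨hy, fun y' hy' => (h y' hy').2⟩⟩
  rw [this]
  exact hs.inter (isClosed_biInter fun y' _ => hf.preimage_isClosed_of_isClosed hs isClosed_Ici)

theorem strictlySingleDipped_of_forall_notMem_Ioo {x0 x1 y0 y1 : ℝ} {μ : Measure ℝ}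
    [IsProbabilityMeasure μ] [NullSingletonClass μ] (hμX : μ (Icc x0 x1)ᶜ = 0)
    {γ : Measure (ℝ × ProbabilityMeasure ℝ)} (C : ℝ → Set ℝ) (w : ℝ → ℝ → ℝ) (z : ℝ → ℝ)
    (hC : ∀ x ∈ Icc x0 x1, IsCompact (C x) ∧ (C x).Nonempty ∧ C x ⊆ Icc y0 y1)
    (hw : ∀ x ∈ Icc x0 x1, InjOn (w x) (Icc y0 y1))
    (hnest : ∀ x ∈ Icc x0 x1, ∀ x' ∈ Icc x0 x1, x < x' →
      ∀ a ∈ C x, ∀ b ∈ C x, ∀ y ∈ C x', y ∉ Ioo a b)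
    (hsupp : ∀ a ∈ msupport γ, a.1 ∈ Icc x0 x1 →
      (a.2 : Measure ℝ) (C a.1)ᶜ = 0 ∧ ∫ y, w a.1 y ∂a.2 = z a.1) :
    StrictlySingleDipped x0 x1 y0 y1 μ γ := by
  set B := {x ∈ Icc x0 x1 | ∃ a ∈ C x, ∃ b ∈ C x, ∃ y ∈ C x, y ∈ Ioo a b}
  have hB : B.Countable := countable_setOf_exists_mem_Ioo hnest
  set Td : ℝ → ℝ := fun x => sInf (C x)
  set Tu : ℝ → ℝ := fun x => sSup (C x)
  -- the clamp only matters at types carrying no support point of `γ`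
  set ρ : ℝ → ℝ := fun x =>
    projIcc 0 1 zero_le_one ((z x - w x (Td x)) / (w x (Tu x) - w x (Td x)))
  have hTd : ∀ x ∈ Icc x0 x1, Td x ∈ C x := fun x hx => (hC x hx).1.sInf_mem (hC x hx).2.1
  have hTu : ∀ x ∈ Icc x0 x1, Tu x ∈ C x := fun x hx => (hC x hx).1.sSup_mem (hC x hx).2.1
  have hpair : ∀ x ∈ Icc x0 x1 \ B, C x ⊆ {Td x, Tu x} := by
    rintro x ⟨hx, hxB⟩ y hy
    have hbdd := (hC x hx).1.isBounded
    rcases (csInf_le hbdd.bddBelow hy).eq_or_lt with h | hlt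
    · exact Or.inl h.symm
    rcases (le_csSup hbdd.bddAbove hy).eq_or_lt with h | hgt
    · exact Or.inr h
    exact absurd ⟨hx, Td x, hTd x hx, Tu x, hTu x hx, y, hy, hlt, hgt⟩ hxB
  refine ⟨Icc x0 x1 \ B, measurableSet_Icc.diff hB.measurableSet, sdiff_subset, ?_,
    ρ, Td, Tu, ?_, ?_, ?_⟩
  · rw [measure_sdiff_null (hB.measure_zero μ),
      (prob_compl_eq_zero_iff measurableSet_Icc).1 hμX]
  · rintro x ⟨hx, -⟩
    have hbdd := (hC x hx).1.isBounded
    exact ⟨(projIcc 0 1 zero_le_one _).2, (hC x hx).2.2 (hTd x hx), (hC x hx).2.2 (hTu x hx),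
      csInf_le_csSup (hC x hx).2.1 hbdd.bddBelow hbdd.bddAbove⟩
  · intro a ha hXs
    obtain ⟨hconc, hz⟩ := hsupp a ha hXs.1
    have hY := (hC a.1 hXs.1).2.2
    obtain ⟨hr, heq⟩ := eq_two_point_of_integral_eq
      (fun hne => (hw a.1 hXs.1).ne (hY (hTd a.1 hXs.1)) (hY (hTu a.1 hXs.1)) hne)
      (measure_mono_null (compl_subset_compl.2 (hpair a.1 hXs)) hconc) hz
    simpa only [ρ, projIcc_of_mem zero_le_one hr] using heq
  · rintro x ⟨hx, -⟩ x' ⟨hx', -⟩ hlt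
    exact ⟨hnest x hx x' hx' hlt _ (hTd x hx) _ (hTu x hx) _ (hTd x' hx'),
      hnest x hx x' hx' hlt _ (hTd x hx) _ (hTu x hx) _ (hTu x' hx')⟩

theorem IsCEIcc.exists_measure_compl_setOf_isMaxOn_eq_zero_and_integral_eq
    {x0 x1 y0 y1 z0 z1 : ℝ} {μ ν : Measure ℝ} {γ : Measure (ℝ × ProbabilityMeasure ℝ)}
    {p q : ℝ → ℝ} {m v vz vzz : ℝ → ℝ → ℝ}
    (hce : IsCEIcc x0 x1 y0 y1 (fun x η => v x (∫ y, m x y ∂(η : Measure ℝ))) μ ν γ p q)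
    (hy : y0 ≤ y1) (hμ : μ (Icc x0 x1)ᶜ = 0) (hν : ν (Icc y0 y1)ᶜ = 0)
    (hm : ∀ x ∈ Icc x0 x1, ContinuousOn (m x) (Icc y0 y1))
    (hmZ : ∀ x ∈ Icc x0 x1, ∀ y ∈ Icc y0 y1, m x y ∈ Icc z0 z1)
    (hvz : ∀ x ∈ Icc x0 x1, ∀ z ∈ Icc z0 z1, HasDerivAt (fun t => v x t) (vz x z) z)
    (hvzz : ∀ x ∈ Icc x0 x1, ∀ z ∈ Icc z0 z1, HasDerivAt (fun t => vz x t) (vzz x z) z)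
    (hvzzneg : ∀ x ∈ Icc x0 x1, ∀ z ∈ Icc z0 z1, vzz x z < 0) :
    ∃ z : ℝ → ℝ, (∀ x ∈ Icc x0 x1, z x ∈ Icc z0 z1) ∧ ∀ a ∈ msupport γ, a.1 ∈ Icc x0 x1 ∧
      (a.2 : Measure ℝ)
        {y ∈ Icc y0 y1 | IsMaxOn (fun t => vz a.1 (z a.1) * m a.1 t - q t) (Icc y0 y1) y}ᶜ = 0 ∧
      ∫ y, m a.1 y ∂(a.2 : Measure ℝ) = z a.1 := by
  have hsupp := fun a (ha : a ∈ msupport γ) => hce.isMaxOn_of_mem_msupport hy hμ hν ha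
  have hsel (x : ℝ) : ∃ η ∈ DeltaOn y0 y1, ∀ η', (x, η') ∈ msupport γ → (x, η) ∈ msupport γ := by
    by_cases h : ∃ η', (x, η') ∈ msupport γ
    · obtain ⟨η', h'⟩ := h
      exact ⟨η', (hsupp _ h').2.1, fun _ _ => h'⟩
    · exact ⟨diracPM y0, diracPM_mem_DeltaOn ⟨le_rfl, hy⟩, fun η' h' => absurd ⟨η', h'⟩ h⟩
  choose sel hselΔ hsel using hsel
  have hz (x) (hx : x ∈ Icc x0 x1) : ∫ y, m x y ∂(sel x : Measure ℝ) ∈ Icc z0 z1 :=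
    integral_mem_Icc_of_mem_DeltaOn (hm x hx) (hmZ x hx) (hselΔ x)
  refine ⟨fun x => ∫ y, m x y ∂(sel x : Measure ℝ), hz, fun a ha => ?_⟩
  obtain ⟨hX, hΔ, hmax⟩ := hsupp a ha
  obtain ⟨-, hΔ', hmax'⟩ := hsupp _ (hsel a.1 a.2 ha)
  obtain ⟨hmean, hconc⟩ := hmax.integral_eq_and_measure_compl_setOf_isMaxOn_eq_zero (hm _ hX)
    hce.2.2.1.choose_spec.continuousOn (hmZ _ hX)
    (strictConcaveOn_Icc_of_hasDerivAt (hvz _ hX) (hvzz _ hX) (hvzzneg _ hX)) hΔ hΔ' hmax'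
    (hvz _ hX _ (hz _ hX))
  exact ⟨hX, hconc, hmean⟩

theorem equilibrium_strictly_single_dipped_general
    (x0 x1 y0 y1 z0 z1 : ℝ) (hy : y0 < y1)
    (μ ν : Measure ℝ)
    (hμ : HasPosDensityCDF x0 x1 μ) (hν : HasPosDensityCDF y0 y1 ν)
    -- the labor-input function `m` and its derivative data
    (m my mxy : ℝ → ℝ → ℝ)
    (hmZ : ∀ x ∈ Set.Icc x0 x1, ∀ y ∈ Set.Icc y0 y1, m x y ∈ Set.Icc z0 z1)
    (hmy : ∀ x ∈ Set.Icc x0 x1, ∀ y ∈ Set.Icc y0 y1,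
      HasDerivAt (fun t => m x t) (my x y) y)
    (hmxy : ∀ x ∈ Set.Icc x0 x1, ∀ y ∈ Set.Icc y0 y1,
      HasDerivAt (fun t => my t y) (mxy x y) x)
    (hmypos : ∀ x ∈ Set.Icc x0 x1, ∀ y ∈ Set.Icc y0 y1, 0 < my x y)
    -- `m_y` is strictly log-supermodular
    (hlsm : ∀ x ∈ Set.Icc x0 x1, StrictMonoOn (fun y => mxy x y / my x y) (Set.Icc y0 y1))
    -- the production function `v` and its derivative data on `Z = [z0,z1]`
    (v vz vzz : ℝ → ℝ → ℝ)
    (hvz : ∀ x ∈ Set.Icc x0 x1, ∀ z ∈ Set.Icc z0 z1,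
      HasDerivAt (fun t => v x t) (vz x z) z)
    (hvzz : ∀ x ∈ Set.Icc x0 x1, ∀ z ∈ Set.Icc z0 z1,
      HasDerivAt (fun t => vz x t) (vzz x z) z)
    (hvzpos : ∀ x ∈ Set.Icc x0 x1, ∀ z ∈ Set.Icc z0 z1, 0 < vz x z)
    (hvzzneg : ∀ x ∈ Set.Icc x0 x1, ∀ z ∈ Set.Icc z0 z1, vzz x z < 0) :
    -- every competitive-equilibrium assignment (for the moment-measurable `V`) is
    -- strictly single-dipped
    ∀ (γ : Measure (ℝ × ProbabilityMeasure ℝ)) (p q : ℝ → ℝ),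
      IsCEIcc x0 x1 y0 y1
        (fun x η => v x (∫ y, m x y ∂(η : Measure ℝ))) μ ν γ p q →
      StrictlySingleDipped x0 x1 y0 y1 μ γ := by
  intro γ p q hce
  have : IsProbabilityMeasure μ := hμ.1
  have : NullSingletonClass μ := ⟨hμ.measure_singleton⟩
  have hm (x) (hx : x ∈ Icc x0 x1) : ContinuousOn (m x) (Icc y0 y1) :=
    fun y hy => (hmy x hx y hy).continuousAt.continuousWithinAt
  obtain ⟨z, hz, hsupp⟩ := hce.exists_measure_compl_setOf_isMaxOn_eq_zero_and_integral_eq hy.le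
    hμ.2.1 hν.2.1 hm hmZ hvz hvzz hvzzneg
  have hf (x) (hx : x ∈ Icc x0 x1) : ContinuousOn (fun t => vz x (z x) * m x t - q t) (Icc y0 y1) :=
    (continuousOn_const.mul (hm x hx)).sub hce.2.2.1.choose_spec.continuousOn
  refine strictlySingleDipped_of_forall_notMem_Ioo hμ.2.1
    (fun x => {y ∈ Icc y0 y1 | IsMaxOn (fun t => vz x (z x) * m x t - q t) (Icc y0 y1) y}) m z
    (fun x hx => ⟨?_, ?_, sep_subset _ _⟩) (fun x hx => ?_) ?_ (fun a ha _ => (hsupp a ha).2)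
  · exact isCompact_Icc.of_isClosed_subset (isClosed_setOf_isMaxOn isClosed_Icc (hf x hx))
      (sep_subset _ _)
  · exact isCompact_Icc.exists_isMaxOn (nonempty_Icc.2 hy.le) (hf x hx)
  · exact (strictMonoOn_of_hasDerivWithinAt_pos (convex_Icc y0 y1) (hm x hx)
      (fun y hy => (hmy x hx y (interior_subset hy)).hasDerivWithinAt)
      (fun y hy => hmypos x hx y (interior_subset hy))).injOn
  · intro x hx x' hx' hxx' a ha b hb y hy
    exact notMem_Ioo_of_isMaxOn hmy hmxy hmypos hlsm hx hx' hxx' (hvzpos x hx _ (hz x hx))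
      ha.1 hb.1 hy.1 ha.2 hb.2 hy.2

/-- **Strict single-dippedness of the equilibrium assignment under log-supermodularity**
(Theorem 9): with moment-measurable production `V(x,η) = v(x, ∫ m(x,y) dη(y))`, if `m_y`
is strictly log-supermodular, then every competitive-equilibrium assignment is strictly
single-dipped. -/
theorem equilibrium_strictly_single_dipped
    (x0 x1 y0 y1 z0 z1 : ℝ) (hx : x0 < x1) (hy : y0 < y1)
    (μ ν : Measure ℝ)
    (hμ : HasPosDensityCDF x0 x1 μ) (hν : HasPosDensityCDF y0 y1 ν)
    -- the labor-input function `m` and its derivative data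
    (m my mxy : ℝ → ℝ → ℝ)
    (hmZ : ∀ x ∈ Set.Icc x0 x1, ∀ y ∈ Set.Icc y0 y1, m x y ∈ Set.Icc z0 z1)
    (hmy : ∀ x ∈ Set.Icc x0 x1, ∀ y ∈ Set.Icc y0 y1,
      HasDerivAt (fun t => m x t) (my x y) y)
    (hmxy : ∀ x ∈ Set.Icc x0 x1, ∀ y ∈ Set.Icc y0 y1,
      HasDerivAt (fun t => my t y) (mxy x y) x)
    (hmycont : ContinuousOn (fun a : ℝ × ℝ => my a.1 a.2) (Set.Icc x0 x1 ×ˢ Set.Icc y0 y1))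
    (hmxycont : ContinuousOn (fun a : ℝ × ℝ => mxy a.1 a.2) (Set.Icc x0 x1 ×ˢ Set.Icc y0 y1))
    (hmypos : ∀ x ∈ Set.Icc x0 x1, ∀ y ∈ Set.Icc y0 y1, 0 < my x y)
    -- `m_y` is strictly log-supermodular
    (hlsm : ∀ x ∈ Set.Icc x0 x1, StrictMonoOn (fun y => mxy x y / my x y) (Set.Icc y0 y1))
    -- the production function `v` and its derivative data on `Z = [z0,z1]`
    (v vz vxz vzz : ℝ → ℝ → ℝ)
    (hvz : ∀ x ∈ Set.Icc x0 x1, ∀ z ∈ Set.Icc z0 z1,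
      HasDerivAt (fun t => v x t) (vz x z) z)
    (hvxz : ∀ x ∈ Set.Icc x0 x1, ∀ z ∈ Set.Icc z0 z1,
      HasDerivAt (fun t => vz t z) (vxz x z) x)
    (hvzz : ∀ x ∈ Set.Icc x0 x1, ∀ z ∈ Set.Icc z0 z1,
      HasDerivAt (fun t => vz x t) (vzz x z) z)
    (hvzcont : ContinuousOn (fun a : ℝ × ℝ => vz a.1 a.2) (Set.Icc x0 x1 ×ˢ Set.Icc z0 z1))
    (hvxzcont : ContinuousOn (fun a : ℝ × ℝ => vxz a.1 a.2) (Set.Icc x0 x1 ×ˢ Set.Icc z0 z1))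
    (hvzzcont : ContinuousOn (fun a : ℝ × ℝ => vzz a.1 a.2) (Set.Icc x0 x1 ×ˢ Set.Icc z0 z1))
    (hvzpos : ∀ x ∈ Set.Icc x0 x1, ∀ z ∈ Set.Icc z0 z1, 0 < vz x z)
    (hvxzpos : ∀ x ∈ Set.Icc x0 x1, ∀ z ∈ Set.Icc z0 z1, 0 < vxz x z)
    (hvzzneg : ∀ x ∈ Set.Icc x0 x1, ∀ z ∈ Set.Icc z0 z1, vzz x z < 0) :
    -- every competitive-equilibrium assignment (for the moment-measurable `V`) is
    -- strictly single-dipped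
    ∀ (γ : Measure (ℝ × ProbabilityMeasure ℝ)) (p q : ℝ → ℝ),
      IsCEIcc x0 x1 y0 y1
        (fun x η => v x (∫ y, m x y ∂(η : Measure ℝ))) μ ν γ p q →
      StrictlySingleDipped x0 x1 y0 y1 μ γ :=
  equilibrium_strictly_single_dipped_general x0 x1 y0 y1 z0 z1 hy μ ν hμ hν m my mxy hmZ hmy hmxy
    hmypos hlsm v vz vzz hvz hvzz hvzpos hvzzneg
end
end

section
/- Characterization of positive assortative segregation as a uniform price equilibrium: Let w : X × Y × Y → ℝ be twice continuously differentiable (w(x,y,z) is the willingness-to-pay of a type-y student at a type-x school whose student body is concentrated at z). Then PAS is a uniform price equilibrium — i.e. there exist functions p : X → ℝ and q : Y → ℝ such that p(x) + q(S(x)) = w(x, S(x), S(x)) for all x ∈ X and p(x) + q(y) ≥ w(x, y, S(x)) for all (x,y) ∈ X × Y — if and only if for all (x,y) ∈ X × Y: ∫_{S(x)}^{y} ∫_{x}^{S⁻¹(ỹ)} [ w_xy(x̃, ỹ, S(x̃)) + w_yz(x̃, ỹ, S(x̃))·S'(x̃) ] dx̃ dỹ ≥ 0. -/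
open MeasureTheory Set

noncomputable section

/-- A probability measure on `ℝ`, concentrated on `[a,b]`, whose cdf has the continuous
strictly positive density `f` on `[a,b]`. -/
def HasDensityCDF (a b : ℝ) (μ : Measure ℝ) (f : ℝ → ℝ) : Prop :=
  IsProbabilityMeasure μ ∧ μ (Set.Icc a b)ᶜ = 0 ∧
  ContinuousOn f (Set.Icc a b) ∧ (∀ t ∈ Set.Icc a b, 0 < f t) ∧
  ∀ t ∈ Set.Icc a b, cdfOf μ t = ∫ s in a..t, f s

/-!
The integrand `K s t = wxy s t (S s) + wyz s t (S s) * S' s` is the derivative of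
`s ↦ wy s t (S s)`, so the inner integral is `wy (S⁻¹ t) t t - wy x t (S x)`. Integrating in `t`,
the double integral `D x y` equals `Q y - Q (S x) - (w x y (S x) - w x (S x) (S x))` for a
potential `Q` with `Q' t = wy (S⁻¹ t) t t`. Hence `D ≥ 0` says exactly that the prices `q = Q`,
`p x = w x (S x) (S x) - Q (S x)` support PAS. Conversely, for any supporting prices the increments
of `q - Q` along `S` are bounded by `|D x (S x')| = O(|S x' - S x| * |x' - x|)`, so `q - Q` is
constant and `D ≥ 0` follows.
-/

open Topology Asymptotics intervalIntegral

theorem hasDerivWithinAt_comp_of_partial_deriv {φ φₓ : ℝ → ℝ → ℝ} {γ : ℝ → ℝ} {I J : Set ℝ}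
    {s₀ γ' φz : ℝ} (hI : Convex ℝ I) (hs₀ : s₀ ∈ I) (hγJ : MapsTo γ I J)
    (hφₓ : ∀ s ∈ I, ∀ z ∈ J, HasDerivWithinAt (φ · z) (φₓ s z) I s)
    (hφₓc : ContinuousWithinAt (Function.uncurry φₓ) (I ×ˢ J) (s₀, γ s₀))
    (hφz : HasDerivAt (φ s₀) φz (γ s₀)) (hγ : HasDerivWithinAt γ γ' I s₀) :
    HasDerivWithinAt (fun s => φ s (γ s)) (φₓ s₀ (γ s₀) + φz * γ') I s₀ := by
  have hz : HasDerivWithinAt (fun s => φ s₀ (γ s)) (φz * γ') I s₀ :=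
    hφz.comp_hasDerivWithinAt s₀ hγ
  -- mean value theorem in the first variable, with `φₓ` uniformly close to `φₓ s₀ (γ s₀)`
  have hx : (fun s => φ s (γ s) - φ s₀ (γ s) - (s - s₀) * φₓ s₀ (γ s₀))
      =o[𝓝[I] s₀] (fun s => s - s₀) := by
    refine isLittleO_iff.2 fun c hc => ?_
    obtain ⟨δ, hδ, hclose⟩ := Metric.continuousWithinAt_iff.1 hφₓc c hc
    filter_upwards [hγ.continuousWithinAt.eventually (Metric.ball_mem_nhds _ hδ),
      nhdsWithin_le_nhds (Metric.ball_mem_nhds s₀ hδ), self_mem_nhdsWithin] with s hγs hs hsI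
    have hT : Convex ℝ (I ∩ Metric.closedBall s₀ (dist s s₀)) :=
      hI.inter (convex_closedBall s₀ _)
    have hmvt := hT.norm_image_sub_le_of_norm_hasDerivWithin_le
      (f := fun r => φ r (γ s) - r * φₓ s₀ (γ s₀)) (f' := fun r => φₓ r (γ s) - φₓ s₀ (γ s₀))
      (fun r hr => ((hφₓ r hr.1 (γ s) (hγJ hsI)).mono inter_subset_left).sub
        ((hasDerivWithinAt_id r _).mul_const _ |>.congr_deriv (one_mul _)))
      (fun r hr => (hclose (x := (r, γ s)) ⟨hr.1, hγJ hsI⟩ (by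
        rw [Prod.dist_eq]
        exact max_lt ((Metric.mem_closedBall.1 hr.2).trans_lt hs) hγs)).le)
      ⟨hs₀, Metric.mem_closedBall_self dist_nonneg⟩ ⟨hsI, Metric.mem_closedBall.2 le_rfl⟩
    refine le_of_eq_of_le ?_ hmvt
    ring_nf
  rw [hasDerivWithinAt_iff_isLittleO] at hz ⊢
  refine (hx.add hz).congr_left fun s => ?_
  simp only [smul_eq_mul]
  ring

theorem integral_eq_sub_of_hasDerivWithinAt_Icc {f f' : ℝ → ℝ} {a b x y : ℝ}
    (hf : ∀ s ∈ Icc a b, HasDerivWithinAt f (f' s) (Icc a b) s) (hf' : ContinuousOn f' (Icc a b))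
    (hx : x ∈ Icc a b) (hy : y ∈ Icc a b) : ∫ s in x..y, f' s = f y - f x := by
  have hsub := uIcc_subset_Icc hx hy
  refine integral_eq_sub_of_hasDeriv_right
    (fun s hs => (hf s (hsub hs)).continuousWithinAt.mono hsub) (fun s hs => ?_)
    (hf'.mono hsub).intervalIntegrable
  have hs' : s ∈ Ioo a b := ⟨(le_min hx.1 hy.1).trans_lt hs.1, hs.2.trans_le (max_le hx.2 hy.2)⟩
  exact ((hf s (Ioo_subset_Icc_self hs')).hasDerivAt (Icc_mem_nhds hs'.1 hs'.2)).hasDerivWithinAt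

theorem MonotoneOn.continuousOn_of_surjOn_Icc {f : ℝ → ℝ} {a b c d : ℝ}
    (hf : MonotoneOn f (Icc a b)) (hmaps : MapsTo f (Icc a b) (Icc c d))
    (hsurj : SurjOn f (Icc a b) (Icc c d)) : ContinuousOn f (Icc a b) := by
  intro t ht
  have hab : a ≤ b := ht.1.trans ht.2
  -- `f ∘ projIcc` is a monotone surjection onto the densely ordered `Icc c d`
  let g : ℝ → Icc c d := fun s => ⟨f (projIcc a b hab s), hmaps (projIcc a b hab s).2⟩
  have hg : Monotone g := fun s s' h => hf (projIcc a b hab s).2 (projIcc a b hab s').2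
    (monotone_projIcc hab h)
  have hgsurj : Function.Surjective g := by
    rintro ⟨y, hy⟩
    obtain ⟨x, hx, rfl⟩ := hsurj hy
    exact ⟨x, Subtype.ext (by simp [g, projIcc_of_mem hab hx])⟩
  exact (continuous_subtype_val.comp (hg.continuous_of_surjective hgsurj)).continuousWithinAt
    |>.congr_of_mem (fun s hs => by simp [g, projIcc_of_mem hab hs]) ht

theorem StrictMonoOn.continuousOn_of_rightInverse {S Sinv : ℝ → ℝ} {x0 x1 y0 y1 : ℝ}
    (hSmono : StrictMonoOn S (Icc x0 x1)) (hSY : MapsTo S (Icc x0 x1) (Icc y0 y1))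
    (hSinv : ∀ y ∈ Icc y0 y1, Sinv y ∈ Icc x0 x1 ∧ S (Sinv y) = y) :
    ContinuousOn Sinv (Icc y0 y1) := by
  refine MonotoneOn.continuousOn_of_surjOn_Icc (fun y hy y' hy' h => ?_)
    (fun y hy => (hSinv y hy).1) fun x hx =>
      ⟨S x, hSY hx, hSmono.injOn (hSinv _ (hSY hx)).1 hx (hSinv _ (hSY hx)).2⟩
  rwa [← hSmono.le_iff_le (hSinv y hy).1 (hSinv y' hy').1, (hSinv y hy).2, (hSinv y' hy').2]

theorem continuousOn_intervalIntegral_of_continuousOn_prod {K : ℝ → ℝ → ℝ} {β : ℝ → ℝ}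
    {a b c d x : ℝ} (hK : ContinuousOn (Function.uncurry K) (Icc a b ×ˢ Icc c d))
    (hβ : ContinuousOn β (Icc c d)) (hβmaps : MapsTo β (Icc c d) (Icc a b)) (hx : x ∈ Icc a b) :
    ContinuousOn (fun t => ∫ s in x..β t, K s t) (Icc c d) := by
  intro t ht
  have hab : a ≤ b := hx.1.trans hx.2
  have hcd : c ≤ d := ht.1.trans ht.2
  -- extend `K` continuously to the plane by clamping both arguments to the rectangle
  set K' : ℝ → ℝ → ℝ := fun s t => K (projIcc a b hab s) (projIcc c d hcd t)
  have hK' : Continuous fun p : ℝ × ℝ => K' p.2 p.1 :=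
    hK.comp_continuous
      (f := fun p : ℝ × ℝ => ((projIcc a b hab p.2 : ℝ), (projIcc c d hcd p.1 : ℝ))) (by fun_prop)
      fun p => ⟨(projIcc a b hab p.2).2, (projIcc c d hcd p.1).2⟩
  have hK'eq : ∀ t ∈ Icc c d, ∫ s in x..β t, K' s t = ∫ s in x..β t, K s t := fun t ht =>
    integral_congr fun s hs => by
      simp [K', projIcc_of_mem hab (uIcc_subset_Icc hx (hβmaps ht) hs), projIcc_of_mem hcd ht]
  exact ((continuous_parametric_primitive_of_continuous (μ := volume) (a₀ := x)
    (f := fun t s => K' s t) hK').comp_continuousOn (continuousOn_id.prodMk hβ) t ht).congr_of_mem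
    (fun t' ht' => (hK'eq t' ht').symm) ht

theorem ContinuousOn.comp_graph {φ : ℝ → ℝ → ℝ → ℝ} {S : ℝ → ℝ} {X Y : Set ℝ}
    (hφ : ContinuousOn (fun a : ℝ × ℝ × ℝ => φ a.1 a.2.1 a.2.2) (X ×ˢ Y ×ˢ Y))
    (hS : ContinuousOn S X) (hSY : MapsTo S X Y) :
    ContinuousOn (fun p : ℝ × ℝ => φ p.1 p.2 (S p.1)) (X ×ˢ Y) :=
  hφ.comp (continuousOn_fst.prodMk <| continuousOn_snd.prodMk <|
    hS.comp continuousOn_fst fun _ hp => hp.1) fun _ hp => ⟨hp.1, hp.2, hSY hp.1⟩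

theorem constant_of_abs_sub_le_mul_abs_sub {n S : ℝ → ℝ} {a b M : ℝ}
    (hS : ContinuousOn S (Icc a b))
    (hn : ∀ x ∈ Icc a b, ∀ x' ∈ Icc a b, |n x' - n x| ≤ M * |S x' - S x| * |x' - x|) :
    ∀ x ∈ Icc a b, n x = n a := by
  have hderiv : ∀ x ∈ Icc a b, HasDerivWithinAt n 0 (Icc a b) x := by
    intro x hx
    rw [hasDerivWithinAt_iff_isLittleO]
    have hsmall : (fun x' => M * (S x' - S x)) =o[𝓝[Icc a b] x] (fun _ => (1 : ℝ)) :=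
      (isLittleO_one_iff ℝ).2 (by simpa using ((hS x hx).sub_const (S x)).const_mul M)
    refine IsBigO.trans_isLittleO (IsBigO.of_bound 1 (eventually_nhdsWithin_of_forall
      fun x' hx' => ?_)) ((hsmall.mul_isBigO (isBigO_refl (fun x' => x' - x) _)).congr_right
        fun _ => one_mul _)
    simp only [smul_zero, sub_zero, Real.norm_eq_abs, one_mul, abs_mul]
    exact (hn x hx x' hx').trans (by gcongr; exact le_abs_self M)
  intro x hx
  simpa [sub_eq_zero] using
    norm_image_sub_le_of_norm_deriv_le_segment' hderiv (fun _ _ => norm_zero.le) x hx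

/-- `u x y` is the willingness to pay of type `y` at school `x` under PAS, `w x y (S x)`. -/
def IsUniformPriceEquilibrium (X Y : Set ℝ) (u : ℝ → ℝ → ℝ) (S p q : ℝ → ℝ) : Prop :=
  (∀ x ∈ X, p x + q (S x) = u x (S x)) ∧ ∀ x ∈ X, ∀ y ∈ Y, u x y ≤ p x + q y

theorem exists_isUniformPriceEquilibrium_iff {u D : ℝ → ℝ → ℝ} {S Sinv Q : ℝ → ℝ} {Y : Set ℝ}
    {x0 x1 M : ℝ} (hScont : ContinuousOn S (Icc x0 x1)) (hSY : MapsTo S (Icc x0 x1) Y)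
    (hSinv : ∀ y ∈ Y, Sinv y ∈ Icc x0 x1 ∧ S (Sinv y) = y)
    (hQ : ∀ x ∈ Icc x0 x1, ∀ y ∈ Y, u x y - u x (S x) = Q y - Q (S x) - D x y)
    (hD : ∀ x ∈ Icc x0 x1, ∀ x' ∈ Icc x0 x1, |D x (S x')| ≤ M * |S x' - S x| * |x' - x|) :
    (∃ p q, IsUniformPriceEquilibrium (Icc x0 x1) Y u S p q) ↔
      ∀ x ∈ Icc x0 x1, ∀ y ∈ Y, 0 ≤ D x y := by
  constructor
  · rintro ⟨p, q, hpq, hle⟩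
    have hm : ∀ x ∈ Icc x0 x1, ∀ y ∈ Y, (q - Q) (S x) - (q - Q) y ≤ D x y := fun x hx y hy => by
      have := hQ x hx y hy
      have := hpq x hx
      have := hle x hx y hy
      simp only [Pi.sub_apply]
      linarith
    have hconst : ∀ x ∈ Icc x0 x1, (q - Q) (S x) = (q - Q) (S x0) :=
      constant_of_abs_sub_le_mul_abs_sub (n := (q - Q) ∘ S) hScont fun x hx x' hx' => by
        have h₁ := (hm x hx _ (hSY hx')).trans (le_abs_self _) |>.trans (hD x hx x' hx')
        have h₂ := (hm x' hx' _ (hSY hx)).trans (le_abs_self _) |>.trans (hD x' hx' x hx)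
        rw [abs_sub_comm (S x), abs_sub_comm x] at h₂
        exact abs_sub_le_iff.2 ⟨by simpa using h₂, by simpa using h₁⟩
    intro x hx y hy
    have hy' : (q - Q) y = (q - Q) (S x) := by
      conv_lhs => rw [← (hSinv y hy).2]
      rw [hconst _ (hSinv y hy).1, hconst x hx]
    linarith [hm x hx y hy]
  · intro hD0
    refine ⟨fun x => u x (S x) - Q (S x), Q, fun x _ => sub_add_cancel _ _, fun x hx y hy => ?_⟩
    have := hQ x hx y hy
    have := hD0 x hx y hy
    linarith

theorem abs_integral_integral_le {K : ℝ → ℝ → ℝ} {S Sinv : ℝ → ℝ} {x0 x1 y0 y1 M x x' : ℝ}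
    (hK : ∀ s ∈ Icc x0 x1, ∀ t ∈ Icc y0 y1, |K s t| ≤ M)
    (hSmono : StrictMonoOn S (Icc x0 x1)) (hSY : MapsTo S (Icc x0 x1) (Icc y0 y1))
    (hSinv : ∀ y ∈ Icc y0 y1, Sinv y ∈ Icc x0 x1 ∧ S (Sinv y) = y)
    (hx : x ∈ Icc x0 x1) (hx' : x' ∈ Icc x0 x1) :
    |∫ t in S x..S x', ∫ s in x..Sinv t, K s t| ≤ M * |S x' - S x| * |x' - x| := by
  have hM : 0 ≤ M := (abs_nonneg _).trans (hK x hx _ (hSY hx))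
  have hbound : ∀ t ∈ uIoc (S x) (S x'), ‖∫ s in x..Sinv t, K s t‖ ≤ M * |x' - x| := by
    intro t ht
    have ht' := uIoc_subset_uIcc ht
    obtain ⟨htX, hSt⟩ := hSinv t (uIcc_subset_Icc (hSY hx) (hSY hx') ht')
    have hmem : Sinv t ∈ uIcc x x' := by
      rw [← hSt] at ht'
      rcases mem_uIcc.1 ht' with ⟨h₁, h₂⟩ | ⟨h₁, h₂⟩
      · exact mem_uIcc.2 (Or.inl ⟨(hSmono.le_iff_le hx htX).1 h₁, (hSmono.le_iff_le htX hx').1 h₂⟩)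
      · exact mem_uIcc.2 (Or.inr ⟨(hSmono.le_iff_le hx' htX).1 h₁, (hSmono.le_iff_le htX hx).1 h₂⟩)
    calc ‖∫ s in x..Sinv t, K s t‖ ≤ M * |Sinv t - x| :=
          norm_integral_le_of_norm_le_const fun s hs =>
            hK s (uIcc_subset_Icc hx htX (uIoc_subset_uIcc hs)) t
              (uIcc_subset_Icc (hSY hx) (hSY hx') (uIoc_subset_uIcc ht))
      _ ≤ M * |x' - x| := mul_le_mul_of_nonneg_left (abs_sub_left_of_mem_uIcc hmem) hM
  simpa [mul_right_comm] using norm_integral_le_of_norm_le_const hbound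

theorem exists_potential_of_hasDerivAt_sub {K u : ℝ → ℝ → ℝ} {Sinv : ℝ → ℝ}
    {x0 x1 y0 y1 : ℝ} (hx : x0 ≤ x1)
    (hK : ContinuousOn (Function.uncurry K) (Icc x0 x1 ×ˢ Icc y0 y1))
    (hSinv : ContinuousOn Sinv (Icc y0 y1)) (hSinvX : MapsTo Sinv (Icc y0 y1) (Icc x0 x1))
    (hu : ∀ a ∈ Icc x0 x1, ∀ b ∈ Icc x0 x1, ∀ t ∈ Icc y0 y1,
      HasDerivAt (fun y => u b y - u a y) (∫ s in a..b, K s t) t) :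
    ∃ Q : ℝ → ℝ, ∀ x ∈ Icc x0 x1, ∀ y ∈ Icc y0 y1, ∀ z ∈ Icc y0 y1,
      u x y - u x z = Q y - Q z - ∫ t in z..y, ∫ s in x..Sinv t, K s t := by
  set A : ℝ → ℝ → ℝ := fun x t => ∫ s in x..Sinv t, K s t
  have hx0 : x0 ∈ Icc x0 x1 := left_mem_Icc.2 hx
  have hA : ∀ x ∈ Icc x0 x1, ∀ y ∈ Icc y0 y1, ∀ z ∈ Icc y0 y1,
      IntervalIntegrable (A x) volume z y := fun x hx y hy z hz =>
    ((continuousOn_intervalIntegral_of_continuousOn_prod hK hSinv hSinvX hx).mono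
      (uIcc_subset_Icc hz hy)).intervalIntegrable
  refine ⟨fun y => u x0 y + ∫ t in y0..y, A x0 t, fun x hx y hy z hz => ?_⟩
  have hy0 : y0 ∈ Icc y0 y1 := left_mem_Icc.2 (hy.1.trans hy.2)
  have hftc : ∫ t in z..y, ∫ s in x..x0, K s t = (u x0 y - u x y) - (u x0 z - u x z) :=
    integral_eq_sub_of_hasDerivAt (fun t ht => hu x hx x0 hx0 t (uIcc_subset_Icc hz hy ht))
      ((continuousOn_intervalIntegral_of_continuousOn_prod hK continuousOn_const
        (fun _ _ => hx0) hx).mono (uIcc_subset_Icc hz hy)).intervalIntegrable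
  have hsplit : ∫ t in z..y, ∫ s in x..x0, K s t = (∫ t in z..y, A x t) - ∫ t in z..y, A x0 t := by
    rw [← integral_sub (hA x hx y hy z hz) (hA x0 hx0 y hy z hz)]
    refine integral_congr fun t ht => ?_
    have htY := uIcc_subset_Icc hz hy ht
    have hKt : ∀ a ∈ Icc x0 x1, ∀ b ∈ Icc x0 x1, IntervalIntegrable (K · t) volume a b :=
      fun a ha b hb => ((hK.comp (continuous_id.prodMk continuous_const).continuousOn
        fun s hs => ⟨hs, htY⟩).mono (uIcc_subset_Icc ha hb)).intervalIntegrable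
    exact eq_sub_of_add_eq (integral_add_adjacent_intervals (hKt x hx x0 hx0)
      (hKt x0 hx0 _ (hSinvX htY)))
  have hQ : (∫ t in y0..y, A x0 t) - ∫ t in y0..z, A x0 t = ∫ t in z..y, A x0 t :=
    integral_interval_sub_left (hA x0 hx0 y hy y0 hy0) (hA x0 hx0 z hz y0 hy0)
  linarith

theorem integral_cross_partial_eq {wy wxy wyz : ℝ → ℝ → ℝ → ℝ} {S S' : ℝ → ℝ}
    {x0 x1 y0 y1 t a b : ℝ} (hSY : MapsTo S (Icc x0 x1) (Icc y0 y1))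
    (hS' : ∀ x ∈ Icc x0 x1, HasDerivAt S (S' x) x)
    (hwxy : ∀ x ∈ Icc x0 x1, ∀ y ∈ Icc y0 y1, ∀ z ∈ Icc y0 y1,
      HasDerivAt (fun t => wy t y z) (wxy x y z) x)
    (hwyz : ∀ x ∈ Icc x0 x1, ∀ y ∈ Icc y0 y1, ∀ z ∈ Icc y0 y1,
      HasDerivAt (fun t => wy x y t) (wyz x y z) z)
    (hwxycont : ContinuousOn (fun a : ℝ × ℝ × ℝ => wxy a.1 a.2.1 a.2.2)
      (Icc x0 x1 ×ˢ Icc y0 y1 ×ˢ Icc y0 y1))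
    (hK : ContinuousOn (fun p : ℝ × ℝ => wxy p.1 p.2 (S p.1) + wyz p.1 p.2 (S p.1) * S' p.1)
      (Icc x0 x1 ×ˢ Icc y0 y1))
    (ht : t ∈ Icc y0 y1) (ha : a ∈ Icc x0 x1) (hb : b ∈ Icc x0 x1) :
    ∫ s in a..b, (wxy s t (S s) + wyz s t (S s) * S' s) = wy b t (S b) - wy a t (S a) := by
  refine integral_eq_sub_of_hasDerivWithinAt_Icc (f := fun s => wy s t (S s)) (fun s hs => ?_)
    (hK.comp (continuous_id.prodMk continuous_const).continuousOn fun s hs => ⟨hs, ht⟩) ha hb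
  exact hasDerivWithinAt_comp_of_partial_deriv (convex_Icc x0 x1) hs hSY
    (fun s hs z hz => (hwxy s hs t ht z hz).hasDerivWithinAt)
    (hwxycont.comp (f := fun p : ℝ × ℝ => (p.1, t, p.2)) (Continuous.continuousOn (by fun_prop))
      (fun p hp => ⟨hp.1, ht, hp.2⟩) (s, S s) ⟨hs, hSY hs⟩)
    (hwyz s hs t ht (S s) (hSY hs)) (hS' s hs).hasDerivWithinAt

theorem pas_is_uniform_price_equilibrium_iff_general
    (x0 x1 y0 y1 : ℝ) (hx : x0 < x1)
    (μ ν : Measure ℝ)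
    -- the PAS matching `S = G⁻¹ ∘ F`, with derivative `S'(x) = f(x)/g(S(x))`,
    -- and its inverse `S⁻¹`
    (S Sinv S' : ℝ → ℝ)
    (hS : ∀ x ∈ Set.Icc x0 x1, S x ∈ Set.Icc y0 y1 ∧ cdfOf ν (S x) = cdfOf μ x)
    (hScont : ContinuousOn S (Set.Icc x0 x1)) (hSmono : StrictMonoOn S (Set.Icc x0 x1))
    (hS' : ∀ x ∈ Set.Icc x0 x1, HasDerivAt S (S' x) x)
    (hS'cont : ContinuousOn S' (Set.Icc x0 x1))
    (hSinv : ∀ y ∈ Set.Icc y0 y1, Sinv y ∈ Set.Icc x0 x1 ∧ S (Sinv y) = y)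
    -- the willingness-to-pay function `w(x,y,z)` and its derivative data
    (w wy wxy wyz : ℝ → ℝ → ℝ → ℝ)
    (hwy : ∀ x ∈ Set.Icc x0 x1, ∀ y ∈ Set.Icc y0 y1, ∀ z ∈ Set.Icc y0 y1,
      HasDerivAt (fun t => w x t z) (wy x y z) y)
    (hwxy : ∀ x ∈ Set.Icc x0 x1, ∀ y ∈ Set.Icc y0 y1, ∀ z ∈ Set.Icc y0 y1,
      HasDerivAt (fun t => wy t y z) (wxy x y z) x)
    (hwyz : ∀ x ∈ Set.Icc x0 x1, ∀ y ∈ Set.Icc y0 y1, ∀ z ∈ Set.Icc y0 y1,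
      HasDerivAt (fun t => wy x y t) (wyz x y z) z)
    (hwxycont : ContinuousOn (fun a : ℝ × ℝ × ℝ => wxy a.1 a.2.1 a.2.2)
      (Set.Icc x0 x1 ×ˢ Set.Icc y0 y1 ×ˢ Set.Icc y0 y1))
    (hwyzcont : ContinuousOn (fun a : ℝ × ℝ × ℝ => wyz a.1 a.2.1 a.2.2)
      (Set.Icc x0 x1 ×ˢ Set.Icc y0 y1 ×ˢ Set.Icc y0 y1)) :
    -- PAS is a UPE iff the double integral is nonnegative for all (x,y)
    (∃ p q : ℝ → ℝ,
      (∀ x ∈ Set.Icc x0 x1, p x + q (S x) = w x (S x) (S x)) ∧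
      (∀ x ∈ Set.Icc x0 x1, ∀ y ∈ Set.Icc y0 y1, w x y (S x) ≤ p x + q y)) ↔
    (∀ x ∈ Set.Icc x0 x1, ∀ y ∈ Set.Icc y0 y1,
      0 ≤ ∫ t in (S x)..y,
        (∫ s in x..(Sinv t), (wxy s t (S s) + wyz s t (S s) * S' s))) := by
  set K : ℝ → ℝ → ℝ := fun s t => wxy s t (S s) + wyz s t (S s) * S' s
  have hSY : MapsTo S (Icc x0 x1) (Icc y0 y1) := fun x hx => (hS x hx).1
  have hK : ContinuousOn (Function.uncurry K) (Icc x0 x1 ×ˢ Icc y0 y1) :=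
    (hwxycont.comp_graph hScont hSY).add ((hwyzcont.comp_graph hScont hSY).mul
      (hS'cont.comp continuousOn_fst fun _ hp => hp.1))
  have hu : ∀ a ∈ Icc x0 x1, ∀ b ∈ Icc x0 x1, ∀ t ∈ Icc y0 y1,
      HasDerivAt (fun y => w b y (S b) - w a y (S a)) (∫ s in a..b, K s t) t := by
    intro a ha b hb t ht
    rw [integral_cross_partial_eq hSY hS' hwxy hwyz hwxycont hK ht ha hb]
    exact (hwy b hb t ht (S b) (hSY hb)).sub (hwy a ha t ht (S a) (hSY ha))
  obtain ⟨Q, hQ⟩ := exists_potential_of_hasDerivAt_sub hx.le hK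
    (hSmono.continuousOn_of_rightInverse hSY hSinv) (fun y hy => (hSinv y hy).1) hu
  obtain ⟨M, hM⟩ := (isCompact_Icc.prod isCompact_Icc).exists_bound_of_continuousOn hK
  exact exists_isUniformPriceEquilibrium_iff hScont hSY hSinv
    (fun x hx y hy => hQ x hx y hy (S x) (hSY hx))
    (fun x hx x' hx' => abs_integral_integral_le (fun s hs t ht => hM (s, t) ⟨hs, ht⟩)
      hSmono hSY hSinv hx hx')

/-- **Characterization of PAS as a uniform price equilibrium** (Theorem 10, part 1):
PAS is a uniform price equilibrium iff the double-integral condition holds for all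
`(x,y) ∈ X × Y`. -/
theorem pas_is_uniform_price_equilibrium_iff
    (x0 x1 y0 y1 : ℝ) (hx : x0 < x1) (hy : y0 < y1)
    (μ ν : Measure ℝ) (f g : ℝ → ℝ)
    (hμ : HasDensityCDF x0 x1 μ f) (hν : HasDensityCDF y0 y1 ν g)
    -- the PAS matching `S = G⁻¹ ∘ F`, with derivative `S'(x) = f(x)/g(S(x))`,
    -- and its inverse `S⁻¹`
    (S Sinv S' : ℝ → ℝ)
    (hS : ∀ x ∈ Set.Icc x0 x1, S x ∈ Set.Icc y0 y1 ∧ cdfOf ν (S x) = cdfOf μ x)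
    (hScont : ContinuousOn S (Set.Icc x0 x1)) (hSmono : StrictMonoOn S (Set.Icc x0 x1))
    (hS' : ∀ x ∈ Set.Icc x0 x1, HasDerivAt S (S' x) x)
    (hS'eq : ∀ x ∈ Set.Icc x0 x1, S' x = f x / g (S x))
    (hS'cont : ContinuousOn S' (Set.Icc x0 x1))
    (hSinv : ∀ y ∈ Set.Icc y0 y1, Sinv y ∈ Set.Icc x0 x1 ∧ S (Sinv y) = y)
    -- the willingness-to-pay function `w(x,y,z)` and its derivative data
    (w wy wxy wyz : ℝ → ℝ → ℝ → ℝ)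
    (hwy : ∀ x ∈ Set.Icc x0 x1, ∀ y ∈ Set.Icc y0 y1, ∀ z ∈ Set.Icc y0 y1,
      HasDerivAt (fun t => w x t z) (wy x y z) y)
    (hwxy : ∀ x ∈ Set.Icc x0 x1, ∀ y ∈ Set.Icc y0 y1, ∀ z ∈ Set.Icc y0 y1,
      HasDerivAt (fun t => wy t y z) (wxy x y z) x)
    (hwyz : ∀ x ∈ Set.Icc x0 x1, ∀ y ∈ Set.Icc y0 y1, ∀ z ∈ Set.Icc y0 y1,
      HasDerivAt (fun t => wy x y t) (wyz x y z) z)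
    (hwxycont : ContinuousOn (fun a : ℝ × ℝ × ℝ => wxy a.1 a.2.1 a.2.2)
      (Set.Icc x0 x1 ×ˢ Set.Icc y0 y1 ×ˢ Set.Icc y0 y1))
    (hwyzcont : ContinuousOn (fun a : ℝ × ℝ × ℝ => wyz a.1 a.2.1 a.2.2)
      (Set.Icc x0 x1 ×ˢ Set.Icc y0 y1 ×ˢ Set.Icc y0 y1)) :
    -- PAS is a UPE iff the double integral is nonnegative for all (x,y)
    (∃ p q : ℝ → ℝ,
      (∀ x ∈ Set.Icc x0 x1, p x + q (S x) = w x (S x) (S x)) ∧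
      (∀ x ∈ Set.Icc x0 x1, ∀ y ∈ Set.Icc y0 y1, w x y (S x) ≤ p x + q y)) ↔
    (∀ x ∈ Set.Icc x0 x1, ∀ y ∈ Set.Icc y0 y1,
      0 ≤ ∫ t in (S x)..y,
        (∫ s in x..(Sinv t), (wxy s t (S s) + wyz s t (S s) * S' s))) :=
  pas_is_uniform_price_equilibrium_iff_general x0 x1 y0 y1 hx μ ν S Sinv S' hS hScont hSmono hS'
    hS'cont hSinv w wy wxy wyz hwy hwxy hwyz hwxycont hwyzcont

end
end
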